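/- arXiv:2102.03867 — 10 statements merged into one kernel-verified Lean document; each statement's English description precedes it below -/
import Mathlib

section
/- For n ≥ 3, the maximum value of pmp_{\underline{1}23}(σ) over σ ∈ S_n is n-2, and the number of σ ∈ S_n with pmp_{\underline{1}23}(σ) = n-2 is exactly (n-2)!. -/
/-- Number of positions `i` that start an occurrence of the pattern 123 in `σ`,
i.e. `pmp` of the positional marked pattern `\underline{1}23`. -/
noncomputable def pmpS123 {n : ℕ} (σ : Equiv.Perm (Fin n)) : ℕ :=
  Nat.card {i : Fin n // ∃ j k : Fin n, i < j ∧ j < k ∧ σ i < σ j ∧ σ j < σ k}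

/-!
A position `i` starting a `123` has two larger positions and two larger values after it, so both
`i` and `σ i` lie in `{0, …, n - 3}`; hence `pmp ≤ n - 2`. Equality means that every position
below `n - 2` starts a `123`. Then `σ` maps `{0, …, n - 3}` into, hence onto, itself, so it
permutes the last two positions, and position `n - 3` forces `σ (n - 2) < σ (n - 1)`: `σ` fixes
them. Conversely, if `σ` fixes the last two positions, they complete a `123` from every earlier
position. The extremal permutations are thus the permutations of `{0, …, n - 3}`.
-/

open Equiv Set

theorem Equiv.Perm.card_subtype_forall_not_imp_apply_eq {α : Type*} [Finite α]
    (p : α → Prop) [DecidablePred p] :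
    Nat.card {σ : Perm α // ∀ a, ¬p a → σ a = a} = (Nat.card {a // p a}).factorial := by
  rw [← Nat.card_congr (Perm.subtypeEquivSubtypePerm p), Nat.card_perm]

theorem Equiv.Perm.mapsTo_compl_of_mapsTo {α : Type*} [Finite α] (σ : Perm α) {s : Set α}
    (h : MapsTo σ s s) : MapsTo σ sᶜ sᶜ :=
  ((((toFinite s).injOn_iff_bijOn_of_mapsTo h).1 σ.injective.injOn).compl σ.bijective).mapsTo

namespace Pattern123

variable {n : ℕ} (σ : Perm (Fin n))

def starts : Set (Fin n) :=
  {i | ∃ j k : Fin n, i < j ∧ j < k ∧ σ i < σ j ∧ σ j < σ k}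

def front (n : ℕ) : Set (Fin n) :=
  {i | (i : ℕ) < n - 2}

theorem mem_front {i : Fin n} : i ∈ front n ↔ (i : ℕ) < n - 2 :=
  Iff.rfl

theorem pmpS123_eq_ncard_starts : pmpS123 σ = (starts σ).ncard :=
  Nat.card_coe_set_eq _

theorem ncard_front : (front n).ncard = n - 2 := by
  change Nat.card {i : Fin n // (i : ℕ) < n - 2} = n - 2
  rw [Nat.card_eq_fintype_card]
  exact Fintype.card_fin_lt_of_le (Nat.sub_le n 2)

variable {σ}

theorem starts_subset_front : starts σ ⊆ front n := by
  rintro i ⟨j, k, hij, hjk, -, -⟩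
  have : (i : ℕ) < j := hij
  have : (j : ℕ) < k := hjk
  simp only [mem_front]
  omega

theorem mapsTo_starts_front : MapsTo σ (starts σ) (front n) := by
  rintro i ⟨j, k, -, -, hij, hjk⟩
  have : (σ i : ℕ) < σ j := hij
  have : (σ j : ℕ) < σ k := hjk
  simp only [mem_front]
  omega

theorem pmpS123_le : pmpS123 σ ≤ n - 2 := by
  rw [pmpS123_eq_ncard_starts, ← ncard_front]
  exact ncard_le_ncard starts_subset_front

theorem pmpS123_eq_iff_starts_eq_front : pmpS123 σ = n - 2 ↔ starts σ = front n := by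
  rw [pmpS123_eq_ncard_starts, ← ncard_front]
  exact ⟨fun h ↦ eq_of_subset_of_ncard_le starts_subset_front h.ge, fun h ↦ h ▸ rfl⟩

theorem apply_eq_self_of_starts_eq_front (hn : 3 ≤ n) (h : starts σ = front n) {i : Fin n}
    (hi : n - 2 ≤ (i : ℕ)) : σ i = i := by
  have hback : MapsTo σ (front n)ᶜ (front n)ᶜ :=
    σ.mapsTo_compl_of_mapsTo (h ▸ mapsTo_starts_front (σ := σ))
  -- position `n - 3` can only be completed by the last two positions, in increasing order
  obtain ⟨j, k, hij, hjk, -, hσjk⟩ : (⟨n - 3, by omega⟩ : Fin n) ∈ starts σ := by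
    simp only [h, mem_front]; omega
  simp only [Fin.lt_def] at hij hjk hσjk
  have hσj := hback (show j ∈ (front n)ᶜ by rw [mem_compl_iff, mem_front]; omega)
  have hσk := hback (show k ∈ (front n)ᶜ by rw [mem_compl_iff, mem_front]; omega)
  rw [mem_compl_iff, mem_front] at hσj hσk
  have hσk_lt := (σ k).isLt
  obtain rfl | rfl : i = j ∨ i = k := by simp only [Fin.ext_iff]; omega
  all_goals exact Fin.ext (by omega)

theorem starts_eq_front_of_apply_eq_self (hfix : ∀ i : Fin n, n - 2 ≤ (i : ℕ) → σ i = i) :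
    starts σ = front n := by
  refine starts_subset_front.antisymm fun i hi ↦ ?_
  rw [mem_front] at hi
  have hj := hfix ⟨n - 2, by omega⟩ le_rfl
  have hk := hfix ⟨n - 1, by omega⟩ (by simp only; omega)
  have hσi : (σ i : ℕ) < n - 2 := by
    have hne₁ : σ i ≠ σ ⟨n - 2, by omega⟩ :=
      σ.injective.ne (by simp only [Ne, Fin.ext_iff]; omega)
    have hne₂ : σ i ≠ σ ⟨n - 1, by omega⟩ :=
      σ.injective.ne (by simp only [Ne, Fin.ext_iff]; omega)
    simp only [hj, hk, Ne, Fin.ext_iff] at hne₁ hne₂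
    have := (σ i).isLt
    omega
  refine ⟨⟨n - 2, by omega⟩, ⟨n - 1, by omega⟩, Fin.lt_def.2 hi,
    Fin.mk_lt_mk.2 (by omega), ?_, ?_⟩
  · rw [hj]
    exact Fin.lt_def.2 hσi
  · rw [hj, hk]
    exact Fin.mk_lt_mk.2 (by omega)

theorem pmpS123_eq_iff (hn : 3 ≤ n) :
    pmpS123 σ = n - 2 ↔ ∀ i : Fin n, ¬(i : ℕ) < n - 2 → σ i = i := by
  simp only [pmpS123_eq_iff_starts_eq_front, not_lt]
  exact ⟨fun h _ ↦ apply_eq_self_of_starts_eq_front hn h, starts_eq_front_of_apply_eq_self⟩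

end Pattern123

open Pattern123 in
theorem stmt1 (n : ℕ) (hn : 3 ≤ n) :
    (∀ σ : Equiv.Perm (Fin n), pmpS123 σ ≤ n - 2) ∧
    (∃ σ : Equiv.Perm (Fin n), pmpS123 σ = n - 2) ∧
    Nat.card {σ : Equiv.Perm (Fin n) // pmpS123 σ = n - 2} = Nat.factorial (n - 2) := by
  refine ⟨fun σ ↦ pmpS123_le, ⟨1, (pmpS123_eq_iff hn).2 fun _ _ ↦ rfl⟩, ?_⟩
  simp_rw [pmpS123_eq_iff hn]
  rw [Perm.card_subtype_forall_not_imp_apply_eq, Nat.card_eq_fintype_card,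
    Fintype.card_fin_lt_of_le (Nat.sub_le n 2)]
end

section
/- For any positional marked pattern τ of length k with underlined position ℓ and underlined value τ_ℓ, and any n ≥ k, the number of permutations σ ∈ S_n with pmp_τ(σ) = n-k+1 equals (n-k+1)!. -/
/-- `σ` has a `τ`-match (with marked position `ℓ`) at position `i`. -/
def HasPMPMatch {k n : ℕ} (τ : Equiv.Perm (Fin k)) (ℓ : Fin k)
    (σ : Equiv.Perm (Fin n)) (i : Fin n) : Prop :=
  ∃ f : Fin k → Fin n, StrictMono f ∧ f ℓ = i ∧
    ∀ a b : Fin k, σ (f a) < σ (f b) ↔ τ a < τ b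

/-- The number of positions at which `σ` has a `τ`-match. -/
noncomputable def pmpCount {k n : ℕ} (τ : Equiv.Perm (Fin k)) (ℓ : Fin k)
    (σ : Equiv.Perm (Fin n)) : ℕ :=
  Nat.card {i : Fin n // HasPMPMatch τ ℓ σ i}

/-!
Write `n = m + k`. A match at position `i` embeds the `k` letters of `τ` increasingly, so
`ℓ ≤ i ≤ m + ℓ`; ranking values instead of positions, `τ ℓ ≤ σ i ≤ m + τ ℓ`. Hence
`pmp_τ(σ) ≤ m + 1`, with equality iff every position of the window `[ℓ, m + ℓ]` is a match
position, and then `σ` maps this window onto the value window `[τ ℓ, m + τ ℓ]`.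

The matches at the two extreme positions `ℓ`, `m + ℓ` and at the two extreme values `τ ℓ`,
`m + τ ℓ` pin `σ` down outside the window: the `j`-th position outside it must carry the `τ j`-th
value outside the value window. Conversely, such a frame together with any `i` in the window is a
match, whatever `σ` does there. So the maximal `σ` are the permutations extending a fixed
bijection between the two complements of size `k - 1`, and there are `(m + 1)!` of them.
-/

open Equiv Finset

theorem Equiv.Perm.exists_apply_eq_of_embedding {α β : Type*} [Finite α] (p g : β ↪ α) :
    ∃ σ : Perm α, ∀ b, σ (p b) = g b := by
  classical
  let e : {x // x ∈ Set.range p} ≃ {x // x ∈ Set.range g} :=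
    (Equiv.ofInjective p p.injective).symm.trans (Equiv.ofInjective g g.injective)
  refine ⟨e.extendSubtype, fun b => ?_⟩
  rw [Equiv.extendSubtype_apply_of_mem e _ ⟨b, rfl⟩]
  simp [e]

theorem Equiv.Perm.card_apply_eq_of_embedding {α β : Type*} [Fintype α] [Fintype β]
    (p g : β ↪ α) :
    Nat.card {σ : Perm α // ∀ b, σ (p b) = g b} =
      (Fintype.card α - Fintype.card β).factorial := by
  classical
  obtain ⟨σ₀, hσ₀⟩ := exists_apply_eq_of_embedding p g
  let e : {σ : Perm α // ∀ b, σ (p b) = g b} ≃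
      {π : Perm α // ∀ x, ¬x ∉ Set.range p → π x = x} :=
    { toFun σ := ⟨σ₀⁻¹ * σ, by
        rintro _ hx
        obtain ⟨b, rfl⟩ := not_not.1 hx
        simp [σ.2, ← hσ₀]⟩
      invFun π := ⟨σ₀ * π, fun b => by simp [π.2 (p b) (by simp), hσ₀]⟩
      left_inv σ := by simp
      right_inv π := by simp }
  rw [Nat.card_congr (e.trans (Perm.subtypeEquivSubtypePerm _).symm), Nat.card_perm,
    Nat.card_eq_fintype_card, Fintype.card_subtype_compl,
    Set.card_range_of_injective p.injective]

theorem Fin.sub_le_sub_of_strictMono {k N : ℕ} {φ : Fin k → Fin N} (hφ : StrictMono φ)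
    {a b : Fin k} (hab : a ≤ b) : (b : ℕ) - a ≤ φ b - φ a := by
  have h := Finset.card_le_card_of_injOn φ (s := Finset.Icc a b) (t := Finset.Icc (φ a) (φ b))
    (fun x hx => by
      simp only [Finset.coe_Icc, Set.mem_Icc] at hx ⊢
      exact ⟨hφ.monotone hx.1, hφ.monotone hx.2⟩)
    hφ.injective.injOn
  simp only [Fin.card_Icc] at h
  omega

theorem StrictMono.eqOn_of_image_eq {β γ : Type*} [LinearOrder β] [WellFoundedLT β]
    [Preorder γ] {f g : β → γ} (hf : StrictMono f) (hg : StrictMono g) {s : Set β}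
    (h : f '' s = g '' s) :
    s.EqOn f g := by
  have hrange : Set.range (f ∘ Subtype.val : s → γ) = Set.range (g ∘ Subtype.val : s → γ) := by
    simpa only [Set.range_comp, Subtype.range_coe] using h
  intro x hx
  exact congrFun ((hf.comp (Subtype.strictMono_coe (· ∈ s))).range_inj
    (hg.comp (Subtype.strictMono_coe (· ∈ s))) |>.1 hrange) ⟨x, hx⟩

namespace PositionalMarkedPattern

variable {m k : ℕ}

/-- Away from `c`, `insertGap m c` is an order isomorphism from `Fin k \ {c}` onto the complement
of `window m c`: it models the letters of a pattern lying outside the marked window. -/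
def insertGap (m : ℕ) (c j : Fin k) : Fin (m + k) :=
  if j < c then Fin.castLE (Nat.le_add_left k m) j else Fin.natAdd m j

def window (m : ℕ) (c : Fin k) : Finset (Fin (m + k)) :=
  Icc (Fin.castLE (Nat.le_add_left k m) c) (Fin.natAdd m c)

theorem val_insertGap (c j : Fin k) :
    (insertGap m c j : ℕ) = if j < c then (j : ℕ) else m + j := by
  unfold insertGap; split_ifs <;> rfl

theorem mem_window {c : Fin k} {x : Fin (m + k)} :
    x ∈ window m c ↔ (c : ℕ) ≤ x ∧ (x : ℕ) ≤ m + c := by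
  simp [window, Fin.le_def]

theorem card_window (c : Fin k) : #(window m c) = m + 1 := by
  simp only [window, Fin.card_Icc, Fin.val_castLE, Fin.val_natAdd]
  omega

theorem insertGap_strictMono (c : Fin k) : StrictMono (insertGap m c) := by
  intro a b hab
  simp only [Fin.lt_def, val_insertGap] at hab ⊢
  split_ifs <;> omega

theorem insertGap_not_mem_window {c j : Fin k} (hj : j ≠ c) :
    insertGap m c j ∉ window m c := by
  have := Fin.val_ne_of_ne hj
  simp only [mem_window, val_insertGap, Fin.lt_def]
  split_ifs <;> omega

theorem exists_insertGap_eq {c : Fin k} {x : Fin (m + k)} (hx : x ∉ window m c) :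
    ∃ j ≠ c, insertGap m c j = x := by
  rw [mem_window] at hx
  have := x.isLt
  obtain ⟨j, hj⟩ : ∃ j : Fin k, (j : ℕ) = if (x : ℕ) < c then (x : ℕ) else x - m :=
    ⟨⟨if (x : ℕ) < c then x else x - m, by split_ifs <;> omega⟩, rfl⟩
  refine ⟨j, fun hjc => ?_, Fin.ext ?_⟩
  · subst hjc
    split_ifs at hj <;> omega
  · simp only [val_insertGap, Fin.lt_def]
    split_ifs at hj ⊢ <;> omega

theorem insertGap_lt_iff {c j : Fin k} (hj : j ≠ c) {y : Fin (m + k)} (hy : y ∈ window m c) :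
    insertGap m c j < y ↔ j < c := by
  have := Fin.val_ne_of_ne hj
  rw [mem_window] at hy
  simp only [Fin.lt_def, val_insertGap]
  split_ifs <;> omega

theorem strictMono_update_insertGap {c : Fin k} {y : Fin (m + k)} (hy : y ∈ window m c) :
    StrictMono (Function.update (insertGap m c) c y) := by
  intro a b hab
  by_cases ha : a = c <;> by_cases hb : b = c
  · exact absurd (ha ▸ hb ▸ hab) (lt_irrefl _)
  · have hne : insertGap m c b ≠ y := fun h => insertGap_not_mem_window hb (h ▸ hy)
    rw [ha, Function.update_self, Function.update_of_ne hb]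
    exact lt_of_le_of_ne (not_lt.1 ((insertGap_lt_iff hb hy).not.2 (ha ▸ hab).not_gt)) hne.symm
  · rw [hb, Function.update_self, Function.update_of_ne ha]
    exact (insertGap_lt_iff ha hy).2 (hb ▸ hab)
  · simpa [ha, hb] using insertGap_strictMono c hab

theorem mem_window_of_strictMono {φ : Fin k → Fin (m + k)} (hφ : StrictMono φ) (a : Fin k) :
    φ a ∈ window m a := by
  have := a.isLt
  have hfirst := Fin.sub_le_sub_of_strictMono hφ (a := ⟨0, by omega⟩) (b := a)
    (Fin.le_def.2 (Nat.zero_le _))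
  have hlast := Fin.sub_le_sub_of_strictMono hφ (a := a) (b := ⟨k - 1, by omega⟩)
    (Fin.le_def.2 (Nat.le_sub_one_of_lt a.isLt))
  have := (φ ⟨k - 1, by omega⟩).isLt
  rw [mem_window]
  simp only at hfirst hlast
  omega

theorem eq_insertGap_of_val_eq_low {φ : Fin k → Fin (m + k)} (hφ : StrictMono φ) {c j : Fin k}
    (hc : (φ c : ℕ) = c) (hj : j < c) : φ j = insertGap m c j := by
  have h := Fin.sub_le_sub_of_strictMono hφ hj.le
  have hwin := mem_window_of_strictMono hφ j
  rw [mem_window] at hwin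
  apply Fin.ext
  rw [val_insertGap, if_pos hj]
  have := Fin.lt_def.1 hj
  omega

theorem eq_insertGap_of_val_eq_high {φ : Fin k → Fin (m + k)} (hφ : StrictMono φ) {c j : Fin k}
    (hc : (φ c : ℕ) = m + c) (hj : c < j) : φ j = insertGap m c j := by
  have h := Fin.sub_le_sub_of_strictMono hφ hj.le
  have hwin := mem_window_of_strictMono hφ j
  rw [mem_window] at hwin
  apply Fin.ext
  rw [val_insertGap, if_neg hj.asymm]
  have := Fin.lt_def.1 hj
  omega

variable {τ : Perm (Fin k)} {ℓ : Fin k}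

theorem hasPMPMatch_iff {n : ℕ} {σ : Perm (Fin n)} {i : Fin n} :
    HasPMPMatch τ ℓ σ i ↔ ∃ f : Fin k → Fin n,
      StrictMono f ∧ f ℓ = i ∧ StrictMono (fun v => σ (f (τ.symm v))) := by
  constructor
  · rintro ⟨f, hf, hfi, hpat⟩
    exact ⟨f, hf, hfi, fun u v huv => (hpat _ _).2 (by simpa using huv)⟩
  · rintro ⟨f, hf, hfi, hψ⟩
    exact ⟨f, hf, hfi, fun a b => by simpa using hψ.lt_iff_lt (a := τ a) (b := τ b)⟩

variable {σ : Perm (Fin (m + k))}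

theorem mem_window_of_hasPMPMatch {i : Fin (m + k)} (h : HasPMPMatch τ ℓ σ i) :
    i ∈ window m ℓ := by
  obtain ⟨f, hf, rfl, -⟩ := hasPMPMatch_iff.1 h
  exact mem_window_of_strictMono hf ℓ

theorem apply_mem_window_of_hasPMPMatch {i : Fin (m + k)} (h : HasPMPMatch τ ℓ σ i) :
    σ i ∈ window m (τ ℓ) := by
  obtain ⟨f, -, rfl, hψ⟩ := hasPMPMatch_iff.1 h
  simpa using mem_window_of_strictMono hψ (τ ℓ)

theorem pmpCount_eq_iff :
    pmpCount τ ℓ σ = m + 1 ↔ ∀ i ∈ window m ℓ, HasPMPMatch τ ℓ σ i := by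
  classical
  rw [pmpCount, Nat.card_eq_fintype_card, Fintype.card_subtype]
  have hsub : ({i | HasPMPMatch τ ℓ σ i} : Finset _) ⊆ window m ℓ := fun i hi =>
    mem_window_of_hasPMPMatch (mem_filter.1 hi).2
  constructor
  · intro h i hi
    have heq := eq_of_subset_of_card_le hsub (by rw [card_window, h])
    exact (mem_filter.1 (heq ▸ hi)).2
  · intro h
    rw [Subset.antisymm hsub fun i hi => mem_filter.2 ⟨mem_univ _, h i hi⟩, card_window]

theorem apply_mem_window_iff (hmax : ∀ i ∈ window m ℓ, HasPMPMatch τ ℓ σ i) {x : Fin (m + k)} :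
    σ x ∈ window m (τ ℓ) ↔ x ∈ window m ℓ := by
  have himage : (window m ℓ).map σ.toEmbedding = window m (τ ℓ) :=
    eq_of_subset_of_card_le
      (fun y hy => by
        obtain ⟨x, hx, rfl⟩ := mem_map.1 hy
        exact apply_mem_window_of_hasPMPMatch (hmax x hx))
      (by simp [card_window])
  rw [← himage, mem_map_equiv, Equiv.symm_apply_apply]

theorem exists_match_through_insertGap (hmax : ∀ i ∈ window m ℓ, HasPMPMatch τ ℓ σ i)
    {j : Fin k} (hj : j ≠ ℓ) :
    ∃ f : Fin k → Fin (m + k), StrictMono (fun v => σ (f (τ.symm v))) ∧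
      f ℓ ∈ window m ℓ ∧ f j = insertGap m ℓ j := by
  rcases lt_or_gt_of_ne hj with hlt | hgt
  · obtain ⟨f, hf, hfℓ, hψ⟩ := hasPMPMatch_iff.1 (hmax (Fin.castLE (Nat.le_add_left k m) ℓ)
      (by simp [mem_window]))
    exact ⟨f, hψ, hfℓ ▸ mem_window_of_strictMono hf ℓ,
      eq_insertGap_of_val_eq_low hf (by simp [hfℓ]) hlt⟩
  · obtain ⟨f, hf, hfℓ, hψ⟩ := hasPMPMatch_iff.1 (hmax (Fin.natAdd m ℓ) (by simp [mem_window]))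
    exact ⟨f, hψ, hfℓ ▸ mem_window_of_strictMono hf ℓ,
      eq_insertGap_of_val_eq_high hf (by simp [hfℓ]) hgt⟩

theorem lt_iff_of_apply_insertGap_eq (hmax : ∀ i ∈ window m ℓ, HasPMPMatch τ ℓ σ i)
    {j u : Fin k} (hj : j ≠ ℓ) (hu : u ≠ τ ℓ)
    (h : σ (insertGap m ℓ j) = insertGap m (τ ℓ) u) : u < τ ℓ ↔ τ j < τ ℓ := by
  obtain ⟨f, hψ, hfℓ, hfj⟩ := exists_match_through_insertGap hmax hj
  have hwin : σ (f ℓ) ∈ window m (τ ℓ) := (apply_mem_window_iff hmax).2 hfℓ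
  calc u < τ ℓ ↔ insertGap m (τ ℓ) u < σ (f ℓ) := (insertGap_lt_iff hu hwin).symm
    _ ↔ σ (f (τ.symm (τ j))) < σ (f (τ.symm (τ ℓ))) := by
      rw [← h, ← hfj, Equiv.symm_apply_apply, Equiv.symm_apply_apply]
    _ ↔ τ j < τ ℓ := hψ.lt_iff_lt

theorem apply_insertGap_eq_of_match_on (hmax : ∀ i ∈ window m ℓ, HasPMPMatch τ ℓ σ i)
    {f : Fin k → Fin (m + k)} (hf : StrictMono f)
    {U : Set (Fin k)} (hUℓ : τ ℓ ∉ U)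
    (hfU : ∀ u ∈ U, σ (f (τ.symm u)) = insertGap m (τ ℓ) u)
    (hside : ∀ j ≠ ℓ, ∀ u ≠ τ ℓ,
      σ (insertGap m ℓ j) = insertGap m (τ ℓ) u → (u ∈ U ↔ τ j ∈ U))
    {j : Fin k} (hj : τ j ∈ U) : σ (insertGap m ℓ j) = insertGap m (τ ℓ) (τ j) := by
  -- `f` and `insertGap m ℓ` both map `τ ⁻¹' U` increasingly onto `T`, so they agree there.
  set T := σ ⁻¹' (insertGap m (τ ℓ) '' U)
  have hf_image : f '' (τ ⁻¹' U) = T := by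
    ext x
    constructor
    · rintro ⟨j, hj, rfl⟩
      exact ⟨τ j, hj, by simpa using (hfU _ hj).symm⟩
    · rintro ⟨u, hu, hx⟩
      exact ⟨τ.symm u, by simpa using hu, σ.injective (by rw [hfU u hu, hx])⟩
  have hgap_image : insertGap m ℓ '' (τ ⁻¹' U) = T := by
    ext x
    constructor
    · rintro ⟨j, hj, rfl⟩
      have hjℓ : j ≠ ℓ := fun h => hUℓ (h ▸ hj)
      obtain ⟨u, hu, hxu⟩ := exists_insertGap_eq
        (mt (apply_mem_window_iff hmax).1 (insertGap_not_mem_window hjℓ))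
      exact ⟨u, (hside j hjℓ u hu hxu.symm).2 hj, hxu⟩
    · rintro ⟨u, hu, hx⟩
      have huℓ : u ≠ τ ℓ := fun h => hUℓ (h ▸ hu)
      have hxw : x ∉ window m ℓ := fun h =>
        insertGap_not_mem_window huℓ (hx ▸ (apply_mem_window_iff hmax).2 h)
      obtain ⟨j, hjℓ, rfl⟩ := exists_insertGap_eq hxw
      exact ⟨j, (hside j hjℓ u huℓ hx.symm).1 hu, rfl⟩
  have heq := hf.eqOn_of_image_eq (insertGap_strictMono ℓ) (hf_image.trans hgap_image.symm)
  rw [← heq hj, ← hfU _ hj, Equiv.symm_apply_apply]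

theorem apply_insertGap_eq (hmax : ∀ i ∈ window m ℓ, HasPMPMatch τ ℓ σ i) {j : Fin k}
    (hj : j ≠ ℓ) :
    σ (insertGap m ℓ j) = insertGap m (τ ℓ) (τ j) := by
  rcases lt_or_gt_of_ne (τ.injective.ne hj) with hlt | hgt
  · obtain ⟨f, hf, hfℓ, hψ⟩ := hasPMPMatch_iff.1
      (hmax (σ.symm (Fin.castLE (Nat.le_add_left k m) (τ ℓ)))
        ((apply_mem_window_iff hmax).1 (by simp [mem_window])))
    refine apply_insertGap_eq_of_match_on hmax hf (U := Set.Iio (τ ℓ)) (lt_irrefl (τ ℓ))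
      (fun u hu => eq_insertGap_of_val_eq_low hψ (by simp [hfℓ]) hu)
      (fun j hj u hu h => lt_iff_of_apply_insertGap_eq hmax hj hu h) hlt
  · obtain ⟨f, hf, hfℓ, hψ⟩ := hasPMPMatch_iff.1 (hmax (σ.symm (Fin.natAdd m (τ ℓ)))
      ((apply_mem_window_iff hmax).1 (by simp [mem_window])))
    refine apply_insertGap_eq_of_match_on hmax hf (U := Set.Ioi (τ ℓ)) (lt_irrefl (τ ℓ))
      (fun u hu => eq_insertGap_of_val_eq_high hψ (by simp [hfℓ]) hu)
      (fun j hj u hu h => ?_) hgt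
    have hiff := lt_iff_of_apply_insertGap_eq hmax hj hu h
    have hτj := τ.injective.ne hj
    simp only [Set.mem_Ioi, Fin.lt_def] at hiff hu hτj ⊢
    omega

theorem apply_mem_window_of_forall_apply_insertGap_eq
    (hframe : ∀ j ≠ ℓ, σ (insertGap m ℓ j) = insertGap m (τ ℓ) (τ j))
    {i : Fin (m + k)} (hi : i ∈ window m ℓ) : σ i ∈ window m (τ ℓ) := by
  by_contra h
  obtain ⟨u, hu, hσi⟩ := exists_insertGap_eq h
  have hj : τ.symm u ≠ ℓ := fun h => hu (by rw [← h, Equiv.apply_symm_apply])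
  have hσ := hframe _ hj
  rw [Equiv.apply_symm_apply, hσi] at hσ
  exact insertGap_not_mem_window hj (σ.injective hσ ▸ hi)

theorem hasPMPMatch_of_forall_apply_insertGap_eq
    (hframe : ∀ j ≠ ℓ, σ (insertGap m ℓ j) = insertGap m (τ ℓ) (τ j))
    {i : Fin (m + k)} (hi : i ∈ window m ℓ) : HasPMPMatch τ ℓ σ i := by
  refine hasPMPMatch_iff.2 ⟨Function.update (insertGap m ℓ) ℓ i,
    strictMono_update_insertGap hi, by simp, ?_⟩
  have hψ : (fun v => σ (Function.update (insertGap m ℓ) ℓ i (τ.symm v))) =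
      Function.update (insertGap m (τ ℓ)) (τ ℓ) (σ i) := by
    funext v
    by_cases hv : v = τ ℓ
    · simp [hv]
    · have hvℓ : τ.symm v ≠ ℓ := fun h => hv (by rw [← h, Equiv.apply_symm_apply])
      rw [Function.update_of_ne hvℓ, Function.update_of_ne hv, hframe _ hvℓ,
        Equiv.apply_symm_apply]
  rw [hψ]
  exact strictMono_update_insertGap (apply_mem_window_of_forall_apply_insertGap_eq hframe hi)

theorem pmpCount_eq_iff_forall_apply_insertGap_eq :
    pmpCount τ ℓ σ = m + 1 ↔ ∀ j ≠ ℓ, σ (insertGap m ℓ j) = insertGap m (τ ℓ) (τ j) := by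
  rw [pmpCount_eq_iff]
  exact ⟨fun hmax _ hj => apply_insertGap_eq hmax hj,
    fun hframe _ hi => hasPMPMatch_of_forall_apply_insertGap_eq hframe hi⟩

end PositionalMarkedPattern

theorem stmt3 (n k : ℕ) (hkn : k ≤ n) (τ : Equiv.Perm (Fin k)) (ℓ : Fin k) :
    Nat.card {σ : Equiv.Perm (Fin n) // pmpCount τ ℓ σ = n - k + 1} =
      Nat.factorial (n - k + 1) := by
  obtain ⟨m, rfl⟩ := Nat.exists_eq_add_of_le' hkn
  let outside : {j // j ≠ ℓ} ↪ Fin (m + k) :=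
    ⟨fun j => PositionalMarkedPattern.insertGap m ℓ j,
      (PositionalMarkedPattern.insertGap_strictMono ℓ).injective.comp Subtype.val_injective⟩
  let frame : {j // j ≠ ℓ} ↪ Fin (m + k) :=
    ⟨fun j => PositionalMarkedPattern.insertGap m (τ ℓ) (τ j),
      (PositionalMarkedPattern.insertGap_strictMono (τ ℓ)).injective.comp
        (τ.injective.comp Subtype.val_injective)⟩
  have hcount : ∀ σ : Perm (Fin (m + k)),
      pmpCount τ ℓ σ = m + k - k + 1 ↔ ∀ j, σ (outside j) = frame j := fun σ => by
    rw [Nat.add_sub_cancel,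
      PositionalMarkedPattern.pmpCount_eq_iff_forall_apply_insertGap_eq, Subtype.forall]
    rfl
  rw [Nat.card_congr (Equiv.subtypeEquivRight hcount), Perm.card_apply_eq_of_embedding,
    Fintype.card_fin, Fintype.card_subtype_compl, Fintype.card_subtype_eq, Fintype.card_fin]
  have := ℓ.pos
  congr 1
  omega
end

section
/- For a positional marked pattern τ = τ_1...τ_k with underlined position ℓ, a permutation σ ∈ S_n satisfies pmp_τ(σ) = n-k+1 if and only if: (1) the set {σ_1,...,σ_{ℓ-1}, σ_{n-k+ℓ+1},...,σ_n} equals {1,...,τ_ℓ-1} ∪ {n-k+τ_ℓ+1,...,n}, and (2) red(σ_1...σ_{ℓ-1}σ_{n-k+ℓ+1}...σ_n) = red(τ_1...τ_{ℓ-1}τ_{ℓ+1}...τ_k). -/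
/-- The position in `σ ∈ S_n` corresponding to the index `a ≠ ℓ` of the pattern:
indices before the mark go to the first positions, indices after the mark go to
the last positions. -/
def bpos {n k : ℕ} (hkn : k ≤ n) (ℓ a : Fin k) : Fin n :=
  if (a : ℕ) < (ℓ : ℕ) then ⟨a, lt_of_lt_of_le a.isLt hkn⟩
  else ⟨n - k + (a : ℕ), by have := a.isLt; omega⟩


/-!
A match at position `i` squeezes `i` into the window `[ℓ, n - k + ℓ]` and, read through `τ`,
squeezes `σ i` into the value window `[τ ℓ, n - k + τ ℓ]`; `outer` is the complement of a window.
So `pmp_τ(σ) = n - k + 1` says that every position of the window is a match, and then `σ` maps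
the position window onto the value window by counting, which is (1). The matches at the extreme
positions `ℓ` and `n - k + ℓ` fix the entries before and after the mark at the positions `bpos`,
which tells on which side of the value window each `σ (bpos c)` lies; the matches at the positions
carrying the values `τ ℓ` and `n - k + τ ℓ` then order the entries below, resp. above, the window,
which gives (2). Conversely, (1) and (2) force `σ ∘ bpos ℓ = bpos (τ ℓ) ∘ τ` off `ℓ`, and then
`bpos ℓ` with its value at `ℓ` replaced by any window position `i` is a match at `i`.
-/

open Finset

theorem Finset.card_filter_lt_strictMonoOn {β : Type*} [LinearOrder β] (t : Finset β) :
    StrictMonoOn (fun y => #(t.filter (· < y))) t := by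
  intro x hx y _ hxy
  refine card_lt_card ⟨monotone_filter_right t fun z _ hz => hz.trans hxy, fun hsub => ?_⟩
  simpa using hsub (mem_filter.2 ⟨hx, hxy⟩)

theorem Finset.eqOn_of_image_eq_of_lt_iff_lt {α β : Type*} [LinearOrder β] {s : Finset α}
    {f g : α → β} (hf : Set.InjOn f s) (hg : Set.InjOn g s)
    (hfg : ∀ a ∈ s, ∀ b ∈ s, f a < f b ↔ g a < g b) (h : s.image f = s.image g) :
    Set.EqOn f g s := by
  classical
  intro x hx
  have rank {u : α → β} (hu : Set.InjOn u s) :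
      #((s.image u).filter (· < u x)) = #(s.filter fun a => u a < u x) := by
    rw [filter_image, card_image_of_injOn (hu.mono fun a ha => (mem_filter.1 ha).1)]
  refine (card_filter_lt_strictMonoOn (s.image f)).injOn (mem_image_of_mem f hx)
    (h ▸ mem_image_of_mem g hx) ?_
  show #_ = #_
  rw [rank hf, h, rank hg, filter_congr fun a ha => hfg a ha x hx]

theorem Finset.image_eq_of_mapsTo_of_card_le {α β : Type*} [DecidableEq β] {s : Finset α}
    {t : Finset β} {f : α → β} (hf : Set.InjOn f s) (hst : ∀ a ∈ s, f a ∈ t)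
    (hcard : #t ≤ #s) : s.image f = t :=
  eq_of_subset_of_card_le (image_subset_iff.2 hst) (by rwa [card_image_of_injOn hf])

theorem Equiv.Perm.card_filter_apply_lt {m : ℕ} (π : Equiv.Perm (Fin m)) (x : Fin m) :
    #(univ.filter fun c => π c < x) = x := by
  rw [← Fin.card_Iio x, ← card_map π.toEmbedding]
  congr 1
  ext c
  simp [mem_map_equiv]

theorem Equiv.Perm.card_filter_lt_apply {m : ℕ} (π : Equiv.Perm (Fin m)) (x : Fin m) :
    #(univ.filter fun c => x < π c) = m - 1 - x := by
  rw [← Fin.card_Ioi x, ← card_map π.toEmbedding]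
  congr 1
  ext c
  simp [mem_map_equiv]

theorem StrictMono.sub_val_le_sub_val {k n : ℕ} {f : Fin k → Fin n} (hf : StrictMono f)
    {a b : Fin k} (hab : a ≤ b) : (b : ℕ) - a ≤ f b - f a := by
  have hmaps : Set.MapsTo f (Icc a b) (Icc (f a) (f b)) := fun c hc => by
    simp only [coe_Icc, Set.mem_Icc] at hc ⊢
    exact ⟨hf.monotone hc.1, hf.monotone hc.2⟩
  have hcard := card_le_card_of_injOn f hmaps hf.injective.injOn
  have hfab := Fin.le_def.1 (hf.monotone hab)
  rw [Fin.card_Icc, Fin.card_Icc] at hcard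
  omega

def outer (n : ℕ) {k : ℕ} (m : Fin k) : Finset (Fin n) :=
  univ.filter fun p => (p : ℕ) < m ∨ n - k + m < p

section Outer

variable {n k : ℕ}

@[simp]
theorem mem_outer {m : Fin k} {p : Fin n} : p ∈ outer n m ↔ (p : ℕ) < m ∨ n - k + m < p := by
  simp [outer]

theorem lt_iff_of_mem_outer_of_notMem_outer {m : Fin k} {v w : Fin n} (hv : v ∈ outer n m)
    (hw : w ∉ outer n m) : v < w ↔ (v : ℕ) < m := by
  simp only [mem_outer, not_or, not_lt] at hv hw
  rw [Fin.lt_def]; omega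

theorem StrictMono.apply_notMem_outer {f : Fin k → Fin n} (hf : StrictMono f) (a : Fin k) :
    f a ∉ outer n a := by
  have hk := a.pos
  have h₀ := hf.sub_val_le_sub_val (a := ⟨0, hk⟩) (b := a) (Nat.zero_le _)
  have h₁ := hf.sub_val_le_sub_val (a := a) (b := ⟨k - 1, by omega⟩) (Nat.le_sub_one_of_lt a.isLt)
  have := (f ⟨k - 1, by omega⟩).isLt
  simp only [mem_outer, not_or, not_lt] at h₀ h₁ ⊢
  omega

theorem val_bpos (hkn : k ≤ n) (m a : Fin k) :
    (bpos hkn m a : ℕ) = if (a : ℕ) < m then (a : ℕ) else n - k + a := by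
  unfold bpos; split <;> rfl

theorem bpos_strictMono (hkn : k ≤ n) (m : Fin k) : StrictMono (bpos hkn m) := by
  intro a b hab
  rw [Fin.lt_def, val_bpos, val_bpos]
  rw [Fin.lt_def] at hab
  split_ifs <;> omega

theorem bpos_mem_outer (hkn : k ≤ n) {m a : Fin k} (ha : a ≠ m) : bpos hkn m a ∈ outer n m := by
  have := Fin.val_ne_of_ne ha
  have := a.isLt
  rw [mem_outer, val_bpos]
  split_ifs <;> omega

theorem image_bpos_compl (hkn : k ≤ n) (m : Fin k) :
    ({m}ᶜ : Finset (Fin k)).image (bpos hkn m) = outer n m := by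
  ext p
  simp only [mem_image, mem_compl, mem_singleton]
  refine ⟨fun ⟨a, ha, hap⟩ => hap ▸ bpos_mem_outer hkn ha, fun hp => ?_⟩
  have := p.isLt
  have := m.isLt
  rw [mem_outer] at hp
  by_cases hpm : (p : ℕ) < m
  · refine ⟨⟨p, by omega⟩, Fin.ne_of_val_ne hpm.ne, Fin.ext ?_⟩
    rw [val_bpos, if_pos hpm]
  · have hpm' : (p : ℕ) - (n - k) ≠ m := by omega
    refine ⟨⟨p - (n - k), by omega⟩, Fin.ne_of_val_ne hpm', Fin.ext ?_⟩
    rw [val_bpos, if_neg (show ¬(p : ℕ) - (n - k) < m by omega), Fin.val_mk]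
    omega

theorem card_outer (hkn : k ≤ n) (m : Fin k) : #(outer n m) = k - 1 := by
  rw [← image_bpos_compl hkn, card_image_of_injective _ (bpos_strictMono hkn m).injective,
    card_compl, card_singleton, Fintype.card_fin]

theorem StrictMono.apply_eq_bpos_of_lt {f : Fin k → Fin n} (hf : StrictMono f) (hkn : k ≤ n)
    {m c : Fin k} (hm : (f m : ℕ) = m) (hc : c < m) : f c = bpos hkn m c := by
  have h₀ := hf.apply_notMem_outer c
  have h₁ := hf.sub_val_le_sub_val hc.le
  rw [Fin.lt_def] at hc
  simp only [mem_outer, not_or, not_lt] at h₀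
  exact Fin.ext (by rw [val_bpos, if_pos hc]; omega)

theorem StrictMono.apply_eq_bpos_of_gt {f : Fin k → Fin n} (hf : StrictMono f) (hkn : k ≤ n)
    {m c : Fin k} (hm : (f m : ℕ) = n - k + m) (hc : m < c) : f c = bpos hkn m c := by
  have h₀ := hf.apply_notMem_outer c
  have h₁ := hf.sub_val_le_sub_val hc.le
  rw [Fin.lt_def] at hc
  simp only [mem_outer, not_or, not_lt] at h₀
  exact Fin.ext (by rw [val_bpos, if_neg (by omega)]; omega)

theorem strictMono_update_bpos (hkn : k ≤ n) {m : Fin k} {x : Fin n} (hx : x ∉ outer n m) :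
    StrictMono (Function.update (bpos hkn m) m x) := by
  have key {c : Fin k} (hc : c ≠ m) : bpos hkn m c < x ↔ c < m := by
    have := Fin.val_ne_of_ne hc
    rw [lt_iff_of_mem_outer_of_notMem_outer (bpos_mem_outer hkn hc) hx, val_bpos, Fin.lt_def]
    split_ifs <;> omega
  intro a b hab
  rcases eq_or_ne a m with rfl | ha
  · have hb := hab.ne'
    rw [Function.update_self, Function.update_of_ne hb]
    refine lt_of_le_of_ne (not_lt.1 fun h => ((key hb).1 h).asymm hab) fun h => ?_
    exact hx (h ▸ bpos_mem_outer hkn hb)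
  rcases eq_or_ne b m with rfl | hb
  · rw [Function.update_self, Function.update_of_ne ha]
    exact (key ha).2 hab
  · rw [Function.update_of_ne ha, Function.update_of_ne hb]
    exact bpos_strictMono hkn m hab

end Outer

section Match

variable {n k : ℕ} {τ : Equiv.Perm (Fin k)} {ℓ : Fin k} {σ : Equiv.Perm (Fin n)}

theorem strictMono_comp_symm_of_lt_iff_lt {f : Fin k → Fin n}
    (hστ : ∀ a b, σ (f a) < σ (f b) ↔ τ a < τ b) : StrictMono (σ ∘ f ∘ τ.symm) := by
  intro u v huv
  simpa [hστ] using huv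

theorem HasPMPMatch.notMem_outer {i : Fin n} (h : HasPMPMatch τ ℓ σ i) :
    i ∉ outer n ℓ ∧ σ i ∉ outer n (τ ℓ) := by
  obtain ⟨f, hf, rfl, hστ⟩ := h
  refine ⟨hf.apply_notMem_outer ℓ, ?_⟩
  simpa using (strictMono_comp_symm_of_lt_iff_lt hστ).apply_notMem_outer (τ ℓ)

theorem pmpCount_eq_iff (hkn : k ≤ n) :
    pmpCount τ ℓ σ = n - k + 1 ↔ ∀ i ∉ outer n ℓ, HasPMPMatch τ ℓ σ i := by
  classical
  have hsub : univ.filter (HasPMPMatch τ ℓ σ) ⊆ (outer n ℓ)ᶜ :=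
    fun i hi => mem_compl.2 (mem_filter.1 hi).2.notMem_outer.1
  have hcard : #(outer n ℓ)ᶜ = n - k + 1 := by
    have := ℓ.pos
    rw [card_compl, Fintype.card_fin, card_outer hkn]
    omega
  rw [pmpCount, Nat.card_eq_fintype_card, Fintype.card_subtype, ← hcard]
  constructor
  · intro h i hi
    rw [← mem_compl, ← eq_of_subset_of_card_le hsub h.ge] at hi
    exact (mem_filter.1 hi).2
  · intro h
    exact congrArg card (hsub.antisymm fun i hi => mem_filter.2 ⟨mem_univ i, h i (mem_compl.1 hi)⟩)

theorem mem_outer_iff_of_forall_hasPMPMatch (hkn : k ≤ n)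
    (hall : ∀ i ∉ outer n ℓ, HasPMPMatch τ ℓ σ i) (p : Fin n) :
    p ∈ outer n ℓ ↔ σ p ∈ outer n (τ ℓ) := by
  have hmap : (outer n ℓ)ᶜ.map σ.toEmbedding = (outer n (τ ℓ))ᶜ := by
    refine eq_of_subset_of_card_le (fun v hv => ?_) (by simp [card_compl, card_outer hkn])
    obtain ⟨p, hp, rfl⟩ := mem_map.1 hv
    exact mem_compl.2 (hall p (mem_compl.1 hp)).notMem_outer.2
  rw [← not_iff_not, ← mem_compl, ← mem_compl, ← hmap, mem_map_equiv, σ.symm_apply_apply]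

theorem val_apply_bpos_lt_iff (hkn : k ≤ n) (hall : ∀ i ∉ outer n ℓ, HasPMPMatch τ ℓ σ i)
    {c : Fin k} (hc : c ≠ ℓ) : (σ (bpos hkn ℓ c) : ℕ) < τ ℓ ↔ τ c < τ ℓ := by
  have key {f : Fin k → Fin n} (hf : StrictMono f) (hστ : ∀ a b, σ (f a) < σ (f b) ↔ τ a < τ b)
      (hfc : f c = bpos hkn ℓ c) : (σ (bpos hkn ℓ c) : ℕ) < τ ℓ ↔ τ c < τ ℓ := by
    have hout := (mem_outer_iff_of_forall_hasPMPMatch hkn hall _).1 (bpos_mem_outer hkn hc)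
    have hin := (show HasPMPMatch τ ℓ σ (f ℓ) from ⟨f, hf, rfl, hστ⟩).notMem_outer.2
    rw [← lt_iff_of_mem_outer_of_notMem_outer hout hin, ← hfc, hστ]
  have := ℓ.isLt
  rcases hc.lt_or_gt with hlt | hgt
  · obtain ⟨f, hf, hfℓ, hστ⟩ := hall ⟨ℓ, by omega⟩ (by simp)
    exact key hf hστ (hf.apply_eq_bpos_of_lt hkn (by simp [hfℓ]) hlt)
  · obtain ⟨f, hf, hfℓ, hστ⟩ := hall ⟨n - k + ℓ, by omega⟩ (by simp)
    exact key hf hστ (hf.apply_eq_bpos_of_gt hkn (by simp [hfℓ]) hgt)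

theorem lt_iff_lt_of_image_eq_image_bpos (hkn : k ≤ n) {f : Fin k → Fin n} (hf : StrictMono f)
    (hστ : ∀ a b, σ (f a) < σ (f b) ↔ τ a < τ b) {s : Finset (Fin k)}
    (hs : s.image f = s.image (bpos hkn ℓ)) {a b : Fin k} (ha : a ∈ s) (hb : b ∈ s) :
    σ (bpos hkn ℓ a) < σ (bpos hkn ℓ b) ↔ τ a < τ b := by
  have hbpos := bpos_strictMono hkn ℓ
  have heq := eqOn_of_image_eq_of_lt_iff_lt hf.injective.injOn hbpos.injective.injOn
    (fun a _ b _ => by rw [hf.lt_iff_lt, hbpos.lt_iff_lt]) hs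
  rw [← heq ha, ← heq hb, hστ]

theorem lt_iff_lt_of_lt_mark (hkn : k ≤ n) (hall : ∀ i ∉ outer n ℓ, HasPMPMatch τ ℓ σ i)
    {a b : Fin k} (ha : τ a < τ ℓ) (hb : τ b < τ ℓ) :
    σ (bpos hkn ℓ a) < σ (bpos hkn ℓ b) ↔ τ a < τ b := by
  have := (τ ℓ).isLt
  set v : Fin n := ⟨τ ℓ, by omega⟩
  obtain ⟨f, hf, hfℓ, hστ⟩ := hall (σ.symm v) (by
    rw [mem_outer_iff_of_forall_hasPMPMatch hkn hall, σ.apply_symm_apply]; simp [v])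
  set s := univ.filter fun c => τ c < τ ℓ
  have himage {g : Fin k → Fin n} (hg : Set.InjOn g s) (hgs : ∀ c ∈ s, σ (g c) < v) :
      s.image g = univ.filter (σ · < v) := by
    refine image_eq_of_mapsTo_of_card_le hg (fun c hc => mem_filter.2 ⟨mem_univ _, hgs c hc⟩) ?_
    rw [σ.card_filter_apply_lt, τ.card_filter_apply_lt]
  have hs := (himage hf.injective.injOn fun c hc => ?_).trans
    (himage (bpos_strictMono hkn ℓ).injective.injOn fun c hc => ?_).symm
  · exact lt_iff_lt_of_image_eq_image_bpos hkn hf hστ hs (by simpa [s]) (by simpa [s])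
  · rw [← σ.apply_symm_apply v, ← hfℓ, hστ]
    simpa [s] using hc
  · replace hc : τ c < τ ℓ := by simpa [s] using hc
    exact (val_apply_bpos_lt_iff hkn hall fun h => (h ▸ hc).false).2 hc

theorem hasPMPMatch_trans_revPerm {i : Fin n} :
    HasPMPMatch (τ.trans Fin.revPerm) ℓ (σ.trans Fin.revPerm) i ↔ HasPMPMatch τ ℓ σ i := by
  simp only [HasPMPMatch, Equiv.trans_apply, Fin.revPerm_apply, Fin.rev_lt_rev]
  constructor <;> rintro ⟨f, hf, hi, h⟩ <;> exact ⟨f, hf, hi, fun a b => h b a⟩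

/-- Reversing all values swaps the entries below and above the mark. -/
theorem lt_iff_lt_of_mark_lt (hkn : k ≤ n) (hall : ∀ i ∉ outer n ℓ, HasPMPMatch τ ℓ σ i)
    {a b : Fin k} (ha : τ ℓ < τ a) (hb : τ ℓ < τ b) :
    σ (bpos hkn ℓ a) < σ (bpos hkn ℓ b) ↔ τ a < τ b := by
  simpa using lt_iff_lt_of_lt_mark hkn (fun i hi => hasPMPMatch_trans_revPerm.2 (hall i hi))
    (a := b) (b := a) (by simpa using hb) (by simpa using ha)

theorem lt_iff_lt_of_forall_hasPMPMatch (hkn : k ≤ n)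
    (hall : ∀ i ∉ outer n ℓ, HasPMPMatch τ ℓ σ i) {a b : Fin k} (ha : a ≠ ℓ) (hb : b ≠ ℓ) :
    σ (bpos hkn ℓ a) < σ (bpos hkn ℓ b) ↔ τ a < τ b := by
  have hsplit {c : Fin k} (hc : c ≠ ℓ) := (τ.injective.ne hc).lt_or_gt
  have hside {c : Fin k} (hc : c ≠ ℓ) := val_apply_bpos_lt_iff hkn hall hc
  rcases hsplit ha with hal | hah <;> rcases hsplit hb with hbl | hbh
  · exact lt_iff_lt_of_lt_mark hkn hall hal hbl
  · refine iff_of_true ?_ (hal.trans hbh)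
    have := (hside ha).2 hal
    have := mt (hside hb).1 hbh.not_gt
    rw [Fin.lt_def]; omega
  · refine iff_of_false ?_ (hbl.trans hah).not_gt
    have := (hside hb).2 hbl
    have := mt (hside ha).1 hah.not_gt
    rw [Fin.lt_def]; omega
  · exact lt_iff_lt_of_mark_lt hkn hall hah hbh

theorem apply_bpos_eq_of_lt_iff_lt (hkn : k ≤ n)
    (hout : ∀ p, p ∈ outer n ℓ ↔ σ p ∈ outer n (τ ℓ))
    (hlt : ∀ a b, a ≠ ℓ → b ≠ ℓ → (σ (bpos hkn ℓ a) < σ (bpos hkn ℓ b) ↔ τ a < τ b))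
    {c : Fin k} (hc : c ≠ ℓ) : σ (bpos hkn ℓ c) = bpos hkn (τ ℓ) (τ c) := by
  have hbpos := bpos_strictMono hkn (τ ℓ)
  refine eqOn_of_image_eq_of_lt_iff_lt (s := {ℓ}ᶜ)
    (σ.injective.comp (bpos_strictMono hkn ℓ).injective).injOn
    (hbpos.injective.comp τ.injective).injOn (fun a ha b hb => ?_) ?_ (by simpa using hc)
  · simp only [mem_compl, mem_singleton] at ha hb
    rw [Function.comp_apply, Function.comp_apply, hlt a b ha hb, Function.comp_apply,
      Function.comp_apply, hbpos.lt_iff_lt]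
  · have hτ : ({ℓ}ᶜ : Finset (Fin k)).image τ = {τ ℓ}ᶜ := by
      ext v
      simp only [mem_image, mem_compl, mem_singleton]
      exact ⟨fun ⟨c, hc, hv⟩ => hv ▸ τ.injective.ne hc,
        fun hv => ⟨τ.symm v, fun h => hv (by rw [← h, τ.apply_symm_apply]), τ.apply_symm_apply v⟩⟩
    have hσ : (outer n ℓ).image σ = outer n (τ ℓ) := by
      ext v
      simp only [mem_image]
      exact ⟨fun ⟨p, hp, hv⟩ => hv ▸ (hout p).1 hp,
        fun hv => ⟨σ.symm v, (hout _).2 (by simpa using hv), by simp⟩⟩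
    rw [← image_image, ← image_image, image_bpos_compl, hσ, hτ, image_bpos_compl]

theorem hasPMPMatch_of_apply_bpos_eq (hkn : k ≤ n)
    (hout : ∀ p, p ∈ outer n ℓ ↔ σ p ∈ outer n (τ ℓ))
    (heq : ∀ {c}, c ≠ ℓ → σ (bpos hkn ℓ c) = bpos hkn (τ ℓ) (τ c)) {i : Fin n}
    (hi : i ∉ outer n ℓ) : HasPMPMatch τ ℓ σ i := by
  refine ⟨Function.update (bpos hkn ℓ) ℓ i, strictMono_update_bpos hkn hi,
    Function.update_self .., fun a b => ?_⟩
  have hcomp (c : Fin k) : σ (Function.update (bpos hkn ℓ) ℓ i c) =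
      Function.update (bpos hkn (τ ℓ)) (τ ℓ) (σ i) (τ c) := by
    rcases eq_or_ne c ℓ with rfl | hc
    · simp
    · rw [Function.update_of_ne hc, Function.update_of_ne (τ.injective.ne hc), heq hc]
  rw [hcomp, hcomp, (strictMono_update_bpos hkn (mt (hout i).2 hi)).lt_iff_lt]

end Match

theorem stmt4 (n k : ℕ) (hkn : k ≤ n) (τ : Equiv.Perm (Fin k)) (ℓ : Fin k)
    (σ : Equiv.Perm (Fin n)) :
    pmpCount τ ℓ σ = n - k + 1 ↔
      ((∀ p : Fin n,
          ((p : ℕ) < (ℓ : ℕ) ∨ n - k + (ℓ : ℕ) < (p : ℕ)) ↔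
          ((σ p : ℕ) < (τ ℓ : ℕ) ∨ n - k + (τ ℓ : ℕ) < (σ p : ℕ))) ∧
       (∀ a b : Fin k, a ≠ ℓ → b ≠ ℓ →
          (σ (bpos hkn ℓ a) < σ (bpos hkn ℓ b) ↔ τ a < τ b))) := by
  simp only [← mem_outer]
  rw [pmpCount_eq_iff hkn]
  constructor
  · intro hall
    exact ⟨mem_outer_iff_of_forall_hasPMPMatch hkn hall,
      fun a b => lt_iff_lt_of_forall_hasPMPMatch hkn hall⟩
  · rintro ⟨hout, hlt⟩ i hi
    exact hasPMPMatch_of_apply_bpos_eq hkn hout (apply_bpos_eq_of_lt_iff_lt hkn hout hlt) hi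
end

section
/- The positional marked patterns \underline{1}23 and \underline{1}32 are pmp-Wilf equivalent; that is, for all n, the statistic counting positions i such that σ_i starts an occurrence of 123 in σ and the statistic counting positions i such that σ_i starts an occurrence of 132 in σ have the same distribution over S_n. -/
/-- Number of positions that start an occurrence of 132 in `σ` (pmp of `\underline{1}32`). -/
noncomputable def pmpS132 {n : ℕ} (σ : Equiv.Perm (Fin n)) : ℕ :=
  Nat.card {i : Fin n // ∃ j k : Fin n, i < j ∧ j < k ∧ σ i < σ k ∧ σ k < σ j}

/-!
Write `σ ∈ S_{n+1}` as its first value `p` followed by a permutation `e ∈ S_n` of the remaining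
values in the same relative order. The later positions start a pattern in `σ` iff they do in `e`,
and the first one starts a 123 (resp. 132) iff `p < T₁₂₃(e)` (resp. `p < T₁₃₂(e)`), where
`T₁₂₃(e) - 1` is the largest value of `e` with a larger value to its right and `T₁₃₂(e) - 1` the
largest value with a larger value to its left. Hence `pmp(σ) = pmp(e) + [p < T(e)]` for both
patterns, while the thresholds are updated differently:
`T₁₂₃(σ) = (p + 1 if p < n) ⊔ (T + [p < T])` and `T₁₃₂(σ) = p ⊔ (T + [p < T])`.
So a bijection `Φ` of `S_n` carrying `(pmp₁₂₃, T₁₂₃)` to `(pmp₁₃₂, T₁₃₂)` extends to `S_{n+1}` by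
`p·e ↦ q·Φ(e)`, where `q = p` for `p < T₁₂₃(e)` and the values `T₁₂₃(e), …, n` are rotated
cyclically upwards.
-/

open Equiv Finset

variable {n : ℕ}

lemma Fin.val_succAbove (p : Fin (n + 1)) (i : Fin n) :
    (p.succAbove i : ℕ) = if (i : ℕ) < p then (i : ℕ) else i + 1 := by
  rcases lt_or_ge i.castSucc p with h | h
  · simp [Fin.succAbove_of_castSucc_lt _ _ h, show (i : ℕ) < p from h]
  · simp [Fin.succAbove_of_le_castSucc _ _ h, show (p : ℕ) ≤ i from h]

lemma Fin.val_cycleIcc_last (m p : Fin (n + 1)) :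
    (Fin.cycleIcc m (Fin.last n) p : ℕ) =
      if p < m then (p : ℕ) else if p = Fin.last n then (m : ℕ) else p + 1 := by
  rcases lt_or_ge p m with hpm | hmp
  · simp [Fin.cycleIcc_of_lt hpm, hpm]
  rcases (Fin.le_last p).eq_or_lt with rfl | hp
  · simp [Fin.cycleIcc_of_last hmp, not_lt.2 hmp]
  · simp [Fin.cycleIcc_of_ge_of_lt hmp hp, not_lt.2 hmp, hp.ne, Fin.val_add_one_of_lt hp]

lemma Fin.sup_univ_succ {α : Type*} [SemilatticeSup α] [OrderBot α] (f : Fin (n + 1) → α) :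
    univ.sup f = f 0 ⊔ univ.sup fun i : Fin n => f i.succ := by
  rw [Fin.univ_succ, sup_cons, sup_map]
  rfl

/-- `x ↦ x + [p < x]` is monotone and sends `x + 1` to `p.succAbove x + 1`, so it commutes with
the supremum. -/
lemma sup_ite_succAbove {ι : Type*} (s : Finset ι) (c : ι → Prop) [DecidablePred c]
    (f : ι → Fin n) (p : Fin (n + 1)) :
    (s.sup fun i => if c i then (p.succAbove (f i) : ℕ) + 1 else 0) =
      (s.sup fun i => if c i then (f i : ℕ) + 1 else 0) +
        if (p : ℕ) < s.sup (fun i => if c i then (f i : ℕ) + 1 else 0) then 1 else 0 := by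
  set g : ℕ → ℕ := fun x => x + if (p : ℕ) < x then 1 else 0
  have hg : Monotone g := fun x y hxy => by dsimp only [g]; split_ifs <;> omega
  change _ = g _
  rw [apply_sup_eq_sup_comp g hg.map_sup rfl]
  congr 1 with i
  simp only [g, Function.comp_apply, Fin.val_succAbove]
  split_ifs <;> omega

lemma sup_ite_val_lt (e : Perm (Fin n)) (p : ℕ) (hp : p ≤ n) :
    (univ.sup fun k => if (e k : ℕ) < p then (e k : ℕ) + 1 else 0) = p := by
  refine le_antisymm (Finset.sup_le fun k _ => by split_ifs <;> omega) ?_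
  rcases Nat.eq_zero_or_pos p with rfl | hp0
  · exact Nat.zero_le _
  · convert le_sup (f := fun k => if (e k : ℕ) < p then (e k : ℕ) + 1 else 0)
      (mem_univ (e.symm ⟨p - 1, by omega⟩))
    simp only [apply_symm_apply]
    split_ifs <;> omega

def permCons (p : Fin (n + 1)) (e : Perm (Fin n)) : Perm (Fin (n + 1)) :=
  ((finSuccEquiv n).trans e.optionCongr).trans (finSuccEquiv' p).symm

@[simp] lemma permCons_zero (p : Fin (n + 1)) (e : Perm (Fin n)) : permCons p e 0 = p := by
  simp [permCons]

@[simp] lemma permCons_succ (p : Fin (n + 1)) (e : Perm (Fin n)) (i : Fin n) :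
    permCons p e i.succ = p.succAbove (e i) := by
  simp [permCons]

lemma permCons_injective :
    Function.Injective fun x : Perm (Fin n) × Fin (n + 1) => permCons x.2 x.1 := by
  rintro ⟨e, p⟩ ⟨f, q⟩ h
  obtain rfl : p = q := by simpa using DFunLike.congr_fun h 0
  obtain rfl : e = f := Equiv.ext fun i => by simpa using DFunLike.congr_fun h i.succ
  rfl

noncomputable def permConsEquiv (n : ℕ) : Perm (Fin n) × Fin (n + 1) ≃ Perm (Fin (n + 1)) :=
  Equiv.ofBijective _ ((Fintype.bijective_iff_injective_and_card _).2
    ⟨permCons_injective, by simp [Fintype.card_perm, Nat.factorial_succ, mul_comm]⟩)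

@[simp] lemma permConsEquiv_apply (e : Perm (Fin n)) (p : Fin (n + 1)) :
    permConsEquiv n (e, p) = permCons p e := rfl

def threshold123 (e : Perm (Fin n)) : ℕ :=
  univ.sup fun j => if ∃ k, j < k ∧ e j < e k then (e j : ℕ) + 1 else 0

def threshold132 (e : Perm (Fin n)) : ℕ :=
  univ.sup fun k => if ∃ j, j < k ∧ e k < e j then (e k : ℕ) + 1 else 0

lemma lt_threshold123_iff (e : Perm (Fin n)) (v : ℕ) :
    v < threshold123 e ↔ ∃ j k, j < k ∧ v ≤ e j ∧ e j < e k := by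
  simp only [threshold123, Finset.lt_sup_iff, mem_univ, true_and]
  refine exists_congr fun j => ?_
  split_ifs <;> grind

lemma lt_threshold132_iff (e : Perm (Fin n)) (v : ℕ) :
    v < threshold132 e ↔ ∃ j k, j < k ∧ v ≤ e k ∧ e k < e j := by
  simp only [threshold132, Finset.lt_sup_iff, mem_univ, true_and]
  rw [exists_comm]
  refine exists_congr fun k => ?_
  split_ifs <;> grind

lemma threshold123_le (e : Perm (Fin n)) : threshold123 e ≤ n :=
  Finset.sup_le fun j _ => by have := (e j).isLt; split_ifs <;> omega

lemma pmpS123_permCons (p : Fin (n + 1)) (e : Perm (Fin n)) :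
    pmpS123 (permCons p e) = pmpS123 e + if (p : ℕ) < threshold123 e then 1 else 0 := by
  classical
  simp only [pmpS123, Nat.card_eq_fintype_card, Fintype.card_subtype]
  rw [Fin.card_filter_univ_succ', add_comm]
  simp [Fin.exists_fin_succ, Fin.succAbove_lt_succAbove_iff, Fin.lt_succAbove_iff_le_castSucc,
    lt_threshold123_iff, Fin.le_def]

lemma pmpS132_permCons (p : Fin (n + 1)) (e : Perm (Fin n)) :
    pmpS132 (permCons p e) = pmpS132 e + if (p : ℕ) < threshold132 e then 1 else 0 := by
  classical
  simp only [pmpS132, Nat.card_eq_fintype_card, Fintype.card_subtype]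
  rw [Fin.card_filter_univ_succ', add_comm]
  simp [Fin.exists_fin_succ, Fin.succAbove_lt_succAbove_iff, Fin.lt_succAbove_iff_le_castSucc,
    lt_threshold132_iff, Fin.le_def]

lemma threshold123_permCons (p : Fin (n + 1)) (e : Perm (Fin n)) :
    threshold123 (permCons p e) = (if (p : ℕ) < n then (p : ℕ) + 1 else 0) ⊔
      (threshold123 e + if (p : ℕ) < threshold123 e then 1 else 0) := by
  have hfirst : (∃ k : Fin n, p < p.succAbove (e k)) ↔ (p : ℕ) < n := by
    rw [← e.surjective.exists (p := fun x => p < p.succAbove x)]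
    simp only [Fin.lt_succAbove_iff_le_castSucc, Fin.le_def, Fin.val_castSucc]
    exact ⟨fun ⟨x, hx⟩ => hx.trans_lt x.2, fun h => ⟨⟨n - 1, by omega⟩, by dsimp only; omega⟩⟩
  rw [threshold123, Fin.sup_univ_succ, threshold123, ← sup_ite_succAbove]
  simp [Fin.exists_fin_succ, Fin.succAbove_lt_succAbove_iff, hfirst]

lemma threshold132_permCons (p : Fin (n + 1)) (e : Perm (Fin n)) :
    threshold132 (permCons p e) =
      (p : ℕ) ⊔ (threshold132 e + if (p : ℕ) < threshold132 e then 1 else 0) := by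
  have hcond : ∀ i : Fin n, (∃ j, j < i.succ ∧ p.succAbove (e i) < permCons p e j) ↔
      (e i : ℕ) < p ∨ ∃ j, j < i ∧ e i < e j := by
    intro i
    simp only [Fin.exists_fin_succ, permCons_zero, permCons_succ, Fin.succ_pos, true_and,
      Fin.succ_lt_succ_iff, Fin.succAbove_lt_succAbove_iff, Fin.succAbove_lt_iff_castSucc_lt]
    rfl
  calc threshold132 (permCons p e)
      = univ.sup fun i : Fin n => if (e i : ℕ) < p ∨ ∃ j, j < i ∧ e i < e j then
          (p.succAbove (e i) : ℕ) + 1 else 0 := by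
        simp [threshold132, Fin.sup_univ_succ, hcond]
    _ = (univ.sup fun i => if (e i : ℕ) < p then (e i : ℕ) + 1 else 0) ⊔
          univ.sup fun i => if ∃ j, j < i ∧ e i < e j then (p.succAbove (e i) : ℕ) + 1 else 0 := by
        rw [← sup_sup]
        congr 1 with i
        simp only [Pi.sup_apply, Fin.val_succAbove, _root_.max_def]
        by_cases hi : ∃ j, j < i ∧ e i < e j <;> simp only [hi, or_true, or_false] <;>
          split_ifs <;> omega
    _ = _ := by rw [sup_ite_val_lt e p (Nat.lt_succ_iff.1 p.2), sup_ite_succAbove]; rfl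

theorem exists_equiv_pmpS132_eq_pmpS123 : ∀ n : ℕ, ∃ Φ : Perm (Fin n) ≃ Perm (Fin n),
    ∀ e, pmpS132 (Φ e) = pmpS123 e ∧ threshold132 (Φ e) = threshold123 e
  | 0 => ⟨Equiv.refl _, fun e => by simp [pmpS123, pmpS132, threshold123, threshold132]⟩
  | n + 1 => by
    obtain ⟨Φ, hΦ⟩ := exists_equiv_pmpS132_eq_pmpS123 n
    let rotate (e : Perm (Fin n)) : Perm (Fin (n + 1)) :=
      Fin.cycleIcc ⟨threshold123 e, Nat.lt_succ_of_le (threshold123_le e)⟩ (Fin.last n)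
    refine ⟨(permConsEquiv n).symm.trans ((Φ.prodShear rotate).trans (permConsEquiv n)), ?_⟩
    intro σ
    obtain ⟨⟨e, p⟩, rfl⟩ := (permConsEquiv n).surjective σ
    obtain ⟨hpmp, hthreshold⟩ := hΦ e
    have hp := Nat.lt_succ_iff.1 p.isLt
    have hM := threshold123_le e
    simp only [trans_apply, symm_apply_apply]
    simp only [prodShear_apply, permConsEquiv_apply, rotate]
    rw [pmpS132_permCons, pmpS123_permCons, threshold132_permCons, threshold123_permCons, hpmp,
      hthreshold, Fin.val_cycleIcc_last]
    simp only [Fin.lt_def, Fin.ext_iff, Fin.val_last, _root_.max_def]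
    constructor <;> split_ifs <;> omega

theorem stmt5 (n m : ℕ) :
    Nat.card {σ : Equiv.Perm (Fin n) // pmpS123 σ = m} =
      Nat.card {σ : Equiv.Perm (Fin n) // pmpS132 σ = m} := by
  obtain ⟨Φ, hΦ⟩ := exists_equiv_pmpS132_eq_pmpS123 n
  exact Nat.card_congr (Φ.subtypeEquiv fun σ => by rw [(hΦ σ).1])
end

section
/- The positional marked patterns 1\underline{2}3 and 1\underline{3}2 are pmp-Wilf equivalent: for all n, the number of σ ∈ S_n with exactly m positions j that serve as the middle value in an occurrence of 123 (i.e., exist i < j < k with σ_i < σ_j < σ_k) equals the number of σ ∈ S_n with exactly m positions j serving as the largest value in an occurrence of 132 at the middle position (i.e., exist i < j < k with σ_i < σ_k < σ_j). -/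
/-- Number of positions `j` serving as the middle element of an occurrence of 123
(pmp of `1\underline{2}3`). -/
noncomputable def pmpM123 {n : ℕ} (σ : Equiv.Perm (Fin n)) : ℕ :=
  Nat.card {j : Fin n // ∃ i k : Fin n, i < j ∧ j < k ∧ σ i < σ j ∧ σ j < σ k}

/-- Number of positions `j` serving as the largest element (middle position) of an
occurrence of 132 (pmp of `1\underline{3}2`). -/
noncomputable def pmpM132 {n : ℕ} (σ : Equiv.Perm (Fin n)) : ℕ :=
  Nat.card {j : Fin n // ∃ i k : Fin n, i < j ∧ j < k ∧ σ i < σ k ∧ σ k < σ j}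

/-!
Both statistics are generalised by a threshold `s`: an entry of value at least `s` is treated as
having a smaller entry to its left, as it does when the permutation is the standardised suffix of a
longer one whose prefix has minimum just below `s`. The threshold `n` gives back the original
statistics.

Split off the first entry `a` of a permutation of `Fin (n + 1)`, leaving `τ`. The first entry
contributes `[s ≤ a < n]` to the 123-count and `[s < a]` to the 132-count, and in both cases the
remaining entries contribute the statistic of `τ` at threshold `min s a`. So by induction on `n`,
for all thresholds at once, the two distributions agree once the `n - s` values `a ∈ [s, n)` are
matched with the `n - s` values `a ∈ (s, n]`, all of which give threshold `s`.
-/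

open Equiv Finset

variable {n : ℕ}

namespace Fin

lemma le_val_succAbove_or_le_iff (s : ℕ) (a : Fin (n + 1)) (v : Fin n) :
    s ≤ (a.succAbove v : ℕ) ∨ (a : ℕ) ≤ v ↔ s ≤ (v : ℕ) ∨ (a : ℕ) ≤ v := by
  rw [Fin.succAbove]
  split_ifs with h
  · rw [val_castSucc]
  · rw [Fin.lt_def, val_castSucc] at h
    rw [val_succ]
    omega

lemma lt_succAbove_iff_val_le (a : Fin (n + 1)) (v : Fin n) :
    a < a.succAbove v ↔ (a : ℕ) ≤ v := by
  rw [lt_succAbove_iff_le_castSucc, Fin.le_def, val_castSucc]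

lemma succAbove_lt_iff_val_lt (a : Fin (n + 1)) (v : Fin n) :
    a.succAbove v < a ↔ (v : ℕ) < a := by
  rw [succAbove_lt_iff_castSucc_lt, Fin.lt_def, val_castSucc]

lemma val_succAbove_of_val_lt {a : Fin (n + 1)} {v : Fin n} (h : (v : ℕ) < a) :
    (a.succAbove v : ℕ) = v := by
  rw [succAbove_of_castSucc_lt _ _ (by rwa [Fin.lt_def, val_castSucc]), val_castSucc]

lemma exists_le_val_iff {α : Type*} {f : α → Fin n} (hf : Function.Surjective f) (c : ℕ) :
    (∃ x, c ≤ (f x : ℕ)) ↔ c < n := by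
  rw [← hf.exists (p := fun v => c ≤ (v : ℕ))]
  exact ⟨fun ⟨v, hv⟩ => hv.trans_lt v.isLt, fun h => ⟨⟨c, h⟩, le_rfl⟩⟩

lemma exists_val_lt_and_le_succAbove_iff {α : Type*} {f : α → Fin n}
    (hf : Function.Surjective f) (s : ℕ) (a : Fin (n + 1)) :
    (∃ x, (f x : ℕ) < a ∧ s ≤ (a.succAbove (f x) : ℕ)) ↔ s < a := by
  rw [← hf.exists (p := fun v => (v : ℕ) < a ∧ s ≤ (a.succAbove v : ℕ))]
  constructor
  · rintro ⟨v, hva, hsv⟩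
    rw [val_succAbove_of_val_lt hva] at hsv
    omega
  · intro h
    exact ⟨⟨s, by omega⟩, h, by rw [val_succAbove_of_val_lt h]⟩

end Fin

def consPerm (a : Fin (n + 1)) (τ : Perm (Fin n)) : Perm (Fin (n + 1)) :=
  ((finSuccEquiv n).trans τ.optionCongr).trans (finSuccEquiv' a).symm

@[simp] lemma consPerm_zero (a : Fin (n + 1)) (τ : Perm (Fin n)) : consPerm a τ 0 = a := by
  simp [consPerm]

@[simp] lemma consPerm_succ (a : Fin (n + 1)) (τ : Perm (Fin n)) (i : Fin n) :
    consPerm a τ i.succ = a.succAbove (τ i) := by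
  simp [consPerm]

lemma consPerm_bijective :
    Function.Bijective fun p : Fin (n + 1) × Perm (Fin n) => consPerm p.1 p.2 := by
  rw [Fintype.bijective_iff_injective_and_card]
  refine ⟨fun ⟨a, τ⟩ ⟨b, ρ⟩ h => ?_, by simp [Fintype.card_perm, Nat.factorial_succ]⟩
  have hab : a = b := by simpa using congr($h 0)
  subst hab
  exact Prod.ext rfl (Equiv.ext fun i => by simpa using congr($h i.succ))

lemma card_subtype_perm_succ_eq_sum (P : Perm (Fin (n + 1)) → Prop) :
    Nat.card {σ // P σ} = ∑ a, Nat.card {τ : Perm (Fin n) // P (consPerm a τ)} := by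
  rw [← Nat.card_sigma,
    Nat.card_congr (Equiv.subtypeProdEquivSigmaSubtype fun a τ => P (consPerm a τ)).symm]
  exact Nat.card_congr ((Equiv.ofBijective _ consPerm_bijective).subtypeEquiv fun _ => Iff.rfl).symm

def midCount123 (s : ℕ) (σ : Perm (Fin n)) : ℕ :=
  #{j | (s ≤ (σ j : ℕ) ∨ ∃ i < j, σ i < σ j) ∧ ∃ k > j, σ j < σ k}

def midCount132 (s : ℕ) (σ : Perm (Fin n)) : ℕ :=
  #{j | ∃ k > j, σ k < σ j ∧ (s ≤ (σ k : ℕ) ∨ ∃ i < j, σ i < σ k)}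

lemma midCount123_consPerm (s : ℕ) (a : Fin (n + 1)) (τ : Perm (Fin n)) :
    midCount123 s (consPerm a τ) =
      (if s ≤ a ∧ (a : ℕ) < n then 1 else 0) + midCount123 (min s a) τ := by
  rw [midCount123, midCount123, card_filter, card_filter, Fin.sum_univ_succ]
  congr 1
  · simp [Fin.exists_fin_succ, Fin.lt_succAbove_iff_val_le, Fin.exists_le_val_iff τ.surjective]
  · refine sum_congr rfl fun j _ => ?_
    simp [Fin.exists_fin_succ, Fin.lt_succAbove_iff_val_le, ← or_assoc,
      Fin.le_val_succAbove_or_le_iff]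

lemma midCount132_consPerm (s : ℕ) (a : Fin (n + 1)) (τ : Perm (Fin n)) :
    midCount132 s (consPerm a τ) =
      (if s < a then 1 else 0) + midCount132 (min s a) τ := by
  rw [midCount132, midCount132, card_filter, card_filter, Fin.sum_univ_succ]
  congr 1
  · simp [Fin.exists_fin_succ, Fin.succAbove_lt_iff_val_lt,
      Fin.exists_val_lt_and_le_succAbove_iff τ.surjective]
  · refine sum_congr rfl fun j _ => ?_
    simp [Fin.exists_fin_succ, Fin.lt_succAbove_iff_val_le, ← or_assoc,
      Fin.le_val_succAbove_or_le_iff]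

lemma sum_range_ite_Ico_eq_ite_Ioi {M : Type*} [AddCommMonoid M] (g : ℕ → ℕ → M)
    (s n : ℕ) :
    ∑ x ∈ range (n + 1), g (if s ≤ x ∧ x < n then 1 else 0) (min s x) =
      ∑ x ∈ range (n + 1), g (if s < x then 1 else 0) (min s x) := by
  induction n with
  | zero => simp
  | succ n ih =>
    rw [sum_range_succ, sum_range_succ _ (n + 1), ← ih, sum_range_succ, sum_range_succ _ n]
    have hlow : ∀ x ∈ range n,
        (if s ≤ x ∧ x < n + 1 then 1 else 0) = if s ≤ x ∧ x < n then 1 else 0 := by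
      intro x hx
      rw [mem_range] at hx
      simp only [hx, Nat.lt_succ_of_lt hx]
    rw [sum_congr rfl fun x hx => congrArg (g · (min s x)) (hlow x hx)]
    by_cases h : s ≤ n
    · simp only [h, Nat.lt_succ_of_le h, Nat.lt_add_one, lt_self_iff_false, true_and, and_false,
        ↓reduceIte, min_eq_left h, min_eq_left (h.trans n.le_succ)]
      exact add_right_comm _ _ _
    · simp [h]

theorem card_midCount123_eq_card_midCount132 (n s : ℕ) (P : ℕ → Prop) :
    Nat.card {σ : Perm (Fin n) // P (midCount123 s σ)} =
      Nat.card {σ : Perm (Fin n) // P (midCount132 s σ)} := by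
  induction n generalizing s P with
  | zero => simp [midCount123, midCount132]
  | succ n ih =>
    let g (e t : ℕ) := Nat.card {τ : Perm (Fin n) // P (e + midCount132 t τ)}
    calc Nat.card {σ : Perm (Fin (n + 1)) // P (midCount123 s σ)}
        = ∑ a : Fin (n + 1), g (if s ≤ a ∧ (a : ℕ) < n then 1 else 0) (min s a) := by
          simp only [card_subtype_perm_succ_eq_sum, midCount123_consPerm]
          exact sum_congr rfl fun a _ =>
            ih (min s a) fun k => P ((if s ≤ a ∧ (a : ℕ) < n then 1 else 0) + k)
      _ = ∑ a : Fin (n + 1), g (if s < a then 1 else 0) (min s a) := by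
          rw [Fin.sum_univ_eq_sum_range (fun x => g (if s ≤ x ∧ x < n then 1 else 0) (min s x)),
            Fin.sum_univ_eq_sum_range (fun x => g (if s < x then 1 else 0) (min s x))]
          exact sum_range_ite_Ico_eq_ite_Ioi g s n
      _ = Nat.card {σ : Perm (Fin (n + 1)) // P (midCount132 s σ)} := by
          simp only [card_subtype_perm_succ_eq_sum, midCount132_consPerm, g]

lemma pmpM123_eq_midCount123 (σ : Perm (Fin n)) : pmpM123 σ = midCount123 n σ := by
  rw [pmpM123, midCount123, Nat.card_eq_fintype_card, Fintype.card_subtype]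
  congr 1
  refine filter_congr fun j _ => ⟨?_, ?_⟩
  · rintro ⟨i, k, hij, hjk, hi, hk⟩
    exact ⟨.inr ⟨i, hij, hi⟩, k, hjk, hk⟩
  · rintro ⟨hn | ⟨i, hij, hi⟩, k, hjk, hk⟩
    · exact absurd hn (σ j).isLt.not_ge
    · exact ⟨i, k, hij, hjk, hi, hk⟩

lemma pmpM132_eq_midCount132 (σ : Perm (Fin n)) : pmpM132 σ = midCount132 n σ := by
  rw [pmpM132, midCount132, Nat.card_eq_fintype_card, Fintype.card_subtype]
  congr 1
  refine filter_congr fun j _ => ⟨?_, ?_⟩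
  · rintro ⟨i, k, hij, hjk, hi, hk⟩
    exact ⟨k, hjk, hk, .inr ⟨i, hij, hi⟩⟩
  · rintro ⟨k, hjk, hk, hn | ⟨i, hij, hi⟩⟩
    · exact absurd hn (σ k).isLt.not_ge
    · exact ⟨i, k, hij, hjk, hi, hk⟩

theorem stmt6 (n m : ℕ) :
    Nat.card {σ : Equiv.Perm (Fin n) // pmpM123 σ = m} =
      Nat.card {σ : Equiv.Perm (Fin n) // pmpM132 σ = m} := by
  simpa only [pmpM123_eq_midCount123, pmpM132_eq_midCount132] using
    card_midCount123_eq_card_midCount132 n n (· = m)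
end

section
/- For n ≥ 1, the number of σ ∈ S_{n+1} with pmp_{\underline{1}32}(σ) = 1 equals the sum of the numbers of inversions over all 132-avoiding permutations in S_n. -/
/-- `σ` avoids the pattern 132. -/
def Avoids132 {n : ℕ} (σ : Equiv.Perm (Fin n)) : Prop :=
  ¬ ∃ i j k : Fin n, i < j ∧ j < k ∧ σ i < σ k ∧ σ k < σ j

/-- The number of inversions of `σ`. -/
noncomputable def inversions {n : ℕ} (σ : Equiv.Perm (Fin n)) : ℕ :=
  Nat.card {p : Fin n × Fin n // p.1 < p.2 ∧ σ p.2 < σ p.1}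

/-!
Every σ ∈ S_{n+1} with exactly one 132-start arises, in exactly one way, from a 132-avoiding
τ ∈ S_n and an inversion `(a, b)` of τ: insert, immediately before position `a`, a new entry
whose value lies just below `τ b`. The new entry starts the occurrence formed with `a` and `b`,
and any other 132-start would produce a 132 in τ. Conversely, deleting the entry at the unique
start of σ leaves a 132-avoiding τ (its occurrences lift to σ away from that start), and
132-avoidance forces the entry following the start and the entry of the next larger value to
form an inversion of τ.
-/

open Equiv Fin

variable {n : ℕ}

def Starts132 (σ : Perm (Fin n)) (i : Fin n) : Prop :=
  ∃ j k : Fin n, i < j ∧ j < k ∧ σ i < σ k ∧ σ k < σ j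

lemma pmpS132_eq_one_iff (σ : Perm (Fin n)) :
    pmpS132 σ = 1 ↔ ∃ p, ∀ i, Starts132 σ i ↔ i = p := by
  change Nat.card {i | Starts132 σ i} = 1 ↔ _
  simp only [Nat.card_coe_set_eq, Set.ncard_eq_one, Set.ext_iff, Set.mem_ofPred_eq,
    Set.mem_singleton_iff]

def insertPerm (p v : Fin (n + 1)) (τ : Perm (Fin n)) : Perm (Fin (n + 1)) :=
  ((finSuccEquiv' p).trans τ.optionCongr).trans (finSuccEquiv' v).symm

@[simp] lemma insertPerm_apply_self (p v : Fin (n + 1)) (τ : Perm (Fin n)) :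
    insertPerm p v τ p = v := by
  simp [insertPerm]

@[simp] lemma insertPerm_apply_succAbove (p v : Fin (n + 1)) (τ : Perm (Fin n)) (d : Fin n) :
    insertPerm p v τ (p.succAbove d) = v.succAbove (τ d) := by
  simp [insertPerm]

lemma exists_insertPerm_eq (p : Fin (n + 1)) (σ : Perm (Fin (n + 1))) :
    ∃ v τ, insertPerm p v τ = σ := by
  set g : Perm (Option (Fin n)) := ((finSuccEquiv' p).symm.trans σ).trans (finSuccEquiv' (σ p))
  have hg : g none = none := by simp [g]
  refine ⟨σ p, removeNone g, ?_⟩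
  rw [insertPerm, map_equiv_removeNone, hg, swap_self]
  ext i
  simp [g]

lemma insertPerm_inj {p v v' : Fin (n + 1)} {τ τ' : Perm (Fin n)} :
    insertPerm p v τ = insertPerm p v' τ' ↔ v = v' ∧ τ = τ' := by
  refine ⟨fun h => ?_, fun ⟨hv, hτ⟩ => hv ▸ hτ ▸ rfl⟩
  have hv : v = v' := by simpa using congr($h p)
  refine ⟨hv, Equiv.ext fun d => ?_⟩
  have := congr($h (p.succAbove d))
  simp only [insertPerm_apply_succAbove, hv] at this
  exact succAbove_right_injective this

lemma starts132_insertPerm_succAbove {p v : Fin (n + 1)} {τ : Perm (Fin n)} {d : Fin n}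
    (h : Starts132 τ d) : Starts132 (insertPerm p v τ) (p.succAbove d) := by
  obtain ⟨e, f, hde, hef, h1, h2⟩ := h
  refine ⟨p.succAbove e, p.succAbove f, ?_⟩
  simpa [succAbove_lt_succAbove_iff] using ⟨hde, hef, h1, h2⟩

lemma avoids132_of_starts132_insertPerm {p v : Fin (n + 1)} {τ : Perm (Fin n)}
    (h : ∀ i, Starts132 (insertPerm p v τ) i → i = p) : Avoids132 τ :=
  fun ⟨d, hd⟩ => succAbove_ne p d (h _ (starts132_insertPerm_succAbove hd))

lemma starts132_insertPerm_self_iff {p v : Fin (n + 1)} {τ : Perm (Fin n)} :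
    Starts132 (insertPerm p v τ) p ↔
      ∃ e f, p ≤ castSucc e ∧ e < f ∧ v ≤ castSucc (τ f) ∧ τ f < τ e := by
  constructor
  · rintro ⟨j, k, hpj, hjk, h1, h2⟩
    obtain ⟨e, rfl⟩ := exists_succAbove_eq hpj.ne'
    obtain ⟨f, rfl⟩ := exists_succAbove_eq (hpj.trans hjk).ne'
    simp only [insertPerm_apply_self, insertPerm_apply_succAbove, lt_succAbove_iff_le_castSucc,
      succAbove_lt_succAbove_iff] at hpj hjk h1 h2
    exact ⟨e, f, hpj, hjk, h1, h2⟩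
  · rintro ⟨e, f, hpe, hef, hvf, hfe⟩
    refine ⟨p.succAbove e, p.succAbove f, ?_⟩
    simpa [lt_succAbove_iff_le_castSucc, succAbove_lt_succAbove_iff] using
      ⟨hpe, hef, hvf, hfe⟩

lemma Avoids132.lt_and_lt_of_le {τ : Perm (Fin n)} (hav : Avoids132 τ) {a b e f : Fin n}
    (hae : a ≤ e) (hef : e < f) (hbf : τ b ≤ τ f) (hfe : τ f < τ e) :
    a < b ∧ τ b < τ a := by
  -- otherwise `(b, e, f)`, resp. `(a, e, f)`, is an occurrence of 132
  have heb : e < b := by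
    by_contra! hbe
    have hbf' : τ b < τ f := hbf.lt_of_ne (τ.injective.ne (by omega))
    exact hav ⟨b, e, f, hbe.lt_of_ne (by rintro rfl; omega), hef, hbf', hfe⟩
  refine ⟨hae.trans_lt heb, ?_⟩
  by_contra! hab
  have hab' : τ a < τ b := hab.lt_of_ne (τ.injective.ne (by omega))
  rcases hae.lt_or_eq with hae | rfl
  · exact hav ⟨a, e, f, hae, hef, by omega, hfe⟩
  · omega

lemma starts132_insertPerm_iff_of_avoids132 {τ : Perm (Fin n)} (hav : Avoids132 τ)
    {a b : Fin n} (hab : a < b) (hba : τ b < τ a) (i : Fin (n + 1)) :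
    Starts132 (insertPerm (castSucc a) (castSucc (τ b)) τ) i ↔ i = castSucc a := by
  refine ⟨fun ⟨j, k, hij, hjk, h1, h2⟩ => ?_, ?_⟩
  · by_contra hi
    obtain ⟨d, rfl⟩ := exists_succAbove_eq hi
    rcases eq_self_or_eq_succAbove (castSucc a) j with rfl | ⟨e, rfl⟩ <;>
      rcases eq_self_or_eq_succAbove (castSucc a) k with rfl | ⟨f, rfl⟩ <;>
      simp only [insertPerm_apply_self, insertPerm_apply_succAbove, lt_succAbove_iff_le_castSucc,
        succAbove_lt_iff_castSucc_lt, succAbove_lt_succAbove_iff, castSucc_lt_castSucc_iff,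
        castSucc_le_castSucc_iff, lt_self_iff_false] at hij hjk h1 h2
    -- if the new entry is the `3` (resp. `2`), then `(d, a, b)` (resp. `(d, e, b)`) is a 132 in τ
    · exact hav ⟨d, a, b, hij, hab, h1.trans h2, hba⟩
    · have hbe : τ b < τ e := h2.lt_of_ne (τ.injective.ne (by omega))
      exact hav ⟨d, e, b, hij, by omega, h1, hbe⟩
    · exact hav ⟨d, e, f, hij, hjk, h1, h2⟩
  · rintro rfl
    exact starts132_insertPerm_self_iff.2 ⟨a, b, le_rfl, hab, le_rfl, hba⟩

lemma pmpS132_eq_one_iff_exists_insertPerm (σ : Perm (Fin (n + 1))) :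
    pmpS132 σ = 1 ↔ ∃ τ a b, Avoids132 τ ∧ a < b ∧ τ b < τ a ∧
      insertPerm (castSucc a) (castSucc (τ b)) τ = σ := by
  rw [pmpS132_eq_one_iff]
  constructor
  · rintro ⟨p, hp⟩
    obtain ⟨v, τ, rfl⟩ := exists_insertPerm_eq p σ
    have hav := avoids132_of_starts132_insertPerm fun i => (hp i).1
    obtain ⟨e, f, hpe, hef, hvf, hfe⟩ := starts132_insertPerm_self_iff.1 ((hp p).2 rfl)
    obtain ⟨a, rfl⟩ := exists_castSucc_eq.2 (hpe.trans_lt (castSucc_lt_last e)).ne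
    obtain ⟨w, rfl⟩ := exists_castSucc_eq.2 (hvf.trans_lt (castSucc_lt_last _)).ne
    have hb := hav.lt_and_lt_of_le (b := τ.symm w) (castSucc_le_castSucc_iff.1 hpe) hef
      (by simpa using hvf) hfe
    exact ⟨τ, a, τ.symm w, hav, by simpa using hb⟩
  · rintro ⟨τ, a, b, hav, hab, hba, rfl⟩
    exact ⟨castSucc a, starts132_insertPerm_iff_of_avoids132 hav hab hba⟩

lemma insertPerm_castSucc_inj_of_avoids132 {τ τ' : Perm (Fin n)} {a b a' b' : Fin n}
    (hav : Avoids132 τ) (hab : a < b) (hba : τ b < τ a)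
    (hav' : Avoids132 τ') (hab' : a' < b') (hba' : τ' b' < τ' a')
    (h : insertPerm (castSucc a) (castSucc (τ b)) τ =
      insertPerm (castSucc a') (castSucc (τ' b')) τ') :
    τ = τ' ∧ a = a' ∧ b = b' := by
  have haa : a = a' := castSucc_injective _ <|
    (starts132_insertPerm_iff_of_avoids132 hav' hab' hba' _).1
      (h ▸ (starts132_insertPerm_iff_of_avoids132 hav hab hba _).2 rfl)
  subst haa
  obtain ⟨hv, rfl⟩ := insertPerm_inj.1 h
  exact ⟨rfl, rfl, τ.injective (castSucc_injective _ hv)⟩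

noncomputable def insertInversionEquiv :
    (Σ τ : Perm (Fin n),
        {ab : Fin n × Fin n // Avoids132 τ ∧ ab.1 < ab.2 ∧ τ ab.2 < τ ab.1}) ≃
      {σ : Perm (Fin (n + 1)) // pmpS132 σ = 1} :=
  Equiv.ofBijective
    (fun ⟨τ, ⟨(a, b), hav, hab, hba⟩⟩ => ⟨insertPerm (castSucc a) (castSucc (τ b)) τ,
      (pmpS132_eq_one_iff_exists_insertPerm _).2 ⟨τ, a, b, hav, hab, hba, rfl⟩⟩)
    ⟨fun ⟨τ, ⟨(a, b), hav, hab, hba⟩⟩ ⟨τ', ⟨(a', b'), hav', hab', hba'⟩⟩ h => by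
      obtain ⟨rfl, rfl, rfl⟩ :=
        insertPerm_castSucc_inj_of_avoids132 hav hab hba hav' hab' hba' (congrArg Subtype.val h)
      rfl,
    fun ⟨σ, hσ⟩ => by
      obtain ⟨τ, a, b, hav, hab, hba, rfl⟩ := (pmpS132_eq_one_iff_exists_insertPerm σ).1 hσ
      exact ⟨⟨τ, (a, b), hav, hab, hba⟩, rfl⟩⟩

open Classical in
theorem stmt7_general (n : ℕ) :
    Nat.card {σ : Equiv.Perm (Fin (n + 1)) // pmpS132 σ = 1} =
      ∑ σ : Equiv.Perm (Fin n), if Avoids132 σ then inversions σ else 0 := by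
  rw [← Nat.card_congr insertInversionEquiv, Nat.card_sigma]
  refine Finset.sum_congr rfl fun τ _ => ?_
  split_ifs with h
  · simp only [h, true_and, inversions]
  · simp [h]

open Classical in
theorem stmt7 (n : ℕ) (hn : 1 ≤ n) :
    Nat.card {σ : Equiv.Perm (Fin (n + 1)) // pmpS132 σ = 1} =
      ∑ σ : Equiv.Perm (Fin n), if Avoids132 σ then inversions σ else 0 :=
  stmt7_general n
end

section
/- Suppose σ ∈ S_n satisfies pmp_{\underline{1}32}(σ) = 1 and the unique starting position of a 132-occurrence is t. Then: (1) σ_{t+1} > σ_t; (2) the value σ_t + 1 occurs to the right of position t; and (3) σ_{t+1} ≠ σ_t + 1. -/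
namespace Equiv.Perm

variable {n : ℕ} (σ : Equiv.Perm (Fin n))

def Starts132 (i : Fin n) : Prop :=
  ∃ j k : Fin n, i < j ∧ j < k ∧ σ i < σ k ∧ σ k < σ j

theorem pmpS132_eq_card_starts132 : pmpS132 σ = Nat.card {i // σ.Starts132 i} := rfl

variable {σ}

theorem Starts132.eq_of_pmpS132_eq_one (h : pmpS132 σ = 1) {i t : Fin n}
    (hi : σ.Starts132 i) (ht : σ.Starts132 t) : i = t := by
  rw [pmpS132_eq_card_starts132, Nat.card_eq_one_iff_unique] at h
  exact congrArg Subtype.val (h.1.elim ⟨i, hi⟩ ⟨t, ht⟩)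

theorem apply_lt_apply_of_pmpS132_eq_one (h : pmpS132 σ = 1) {t u v i : Fin n}
    (htu : t < u) (huv : u < v) (htv : σ t < σ v) (hvu : σ v < σ u)
    (hiu : i ≤ u) (hit : i ≠ t) : σ v < σ i := by
  by_contra! hvi
  have hiv : σ i < σ v := hvi.lt_of_ne (σ.injective.ne (hiu.trans_lt huv).ne)
  rcases hiu.lt_or_eq with hiu | rfl
  · exact hit (Starts132.eq_of_pmpS132_eq_one h ⟨u, v, hiu, huv, hiv, hvu⟩
      ⟨u, v, htu, huv, htv, hvu⟩)
  · exact hiv.not_gt hvu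

end Equiv.Perm

open Equiv.Perm in
theorem stmt8 (n : ℕ) (σ : Equiv.Perm (Fin n)) (t : Fin n)
    (h1 : pmpS132 σ = 1)
    (h2 : ∃ u v : Fin n, t < u ∧ u < v ∧ σ t < σ v ∧ σ v < σ u) :
    ∃ ht : (t : ℕ) + 1 < n,
      σ t < σ ⟨(t : ℕ) + 1, ht⟩ ∧
      (∃ r : Fin n, t < r ∧ (σ r : ℕ) = (σ t : ℕ) + 1) ∧
      (σ ⟨(t : ℕ) + 1, ht⟩ : ℕ) ≠ (σ t : ℕ) + 1 := by
  obtain ⟨u, v, htu, huv, htv, hvu⟩ := h2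
  have below : ∀ i ≤ u, i ≠ t → σ v < σ i := fun _ =>
    apply_lt_apply_of_pmpS132_eq_one h1 htu huv htv hvu
  have ht : (t : ℕ) + 1 < n := by omega
  have hnext : σ v < σ ⟨t + 1, ht⟩ :=
    below _ (Fin.le_def.mpr htu) (Fin.ne_of_val_ne (by simp))
  have hsucc : (σ t : ℕ) + 1 < n := by omega
  set r := σ.symm ⟨σ t + 1, hsucc⟩
  have hσr : (σ r : ℕ) = σ t + 1 := by simp [r]
  refine ⟨ht, htv.trans hnext, ⟨r, ?_, hσr⟩, by omega⟩
  by_contra! hrt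
  have hrt' : r ≠ t := fun h => by rw [h] at hσr; omega
  have hvr := below r (hrt.trans htu.le) hrt'
  omega
end

section
/- Let P_{n,k}(x) = Σ x^{pmp_{\underline{1}23}(σ)} where the sum is over σ ∈ S_n whose last ascent is at position k (i.e., σ_k < σ_{k+1} > σ_{k+2} > ... > σ_n). Then for 1 ≤ k ≤ n-1, P_{n,k}(x) = (k-1)x·P_{n-1,k-1}(x) + 1 + Σ_{ℓ=1}^{k} P_{n-1,ℓ}(x), with the conventions P_{n,0}(x) = P_{n,n}(x) = 0. -/
/-- The last ascent of `σ` is at position `k` (1-indexed):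
`σ_k < σ_{k+1} > σ_{k+2} > ... > σ_n`. -/
def LastAscentAt {n : ℕ} (σ : Equiv.Perm (Fin n)) (k : ℕ) : Prop :=
  ∃ (h1 : 0 < k) (h2 : k < n),
    σ ⟨k - 1, by omega⟩ < σ ⟨k, h2⟩ ∧
    ∀ j : ℕ, k ≤ j → ∀ hj : j + 1 < n, σ ⟨j + 1, hj⟩ < σ ⟨j, by omega⟩

open Classical in
/-- `P n k = Σ x^{pmp_{\underline{1}23}(σ)}` over `σ ∈ S_n` with last ascent at position `k`. -/
noncomputable def P (n k : ℕ) : Polynomial ℕ :=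
  ∑ σ : Equiv.Perm (Fin n), if LastAscentAt σ k then Polynomial.X ^ pmpS123 σ else 0

/-!
Classify `σ ∈ S_{m+1}` by the position `i` of its smallest value `0` (positions are 0-indexed, so
`LastAscentAt σ k` says `σ(k-1) < σ(k)` and `σ` decreases from position `k` on). Deleting that
value leaves `τ ∈ S_m`. It does not change which other positions start a 123, and `i` itself
starts one iff `τ` is not decreasing from position `i` on.

For `σ` to have its last ascent at `k`, the `0` must sit either before `k - 1`, at `k - 1`, or at
the very end, since anywhere else it breaks the final decreasing run. Before `k - 1`, `τ` has its
last ascent at `k - 1` and `0, σ(k-1), σ(k)` is a new 123: this gives `(k-1) x P_{m,k-1}`. At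
`k - 1`, `τ` only has to decrease from `k - 1` on; either it is the decreasing permutation
(the term `1`) or its last ascent is at some `ℓ ≤ k - 1`. At the end, `τ` has its last ascent
at `k`.
-/

open Equiv Finset Polynomial

section StrictAntiFrom

variable {α : Type*} [Preorder α] {n : ℕ}

def StrictAntiFrom (f : Fin n → α) (r : ℕ) : Prop :=
  StrictAntiOn f {a | r ≤ (a : ℕ)}

variable {f : Fin n → α} {r : ℕ}

theorem StrictAntiFrom.mono {r' : ℕ} (h : StrictAntiFrom f r) (hr : r ≤ r') :
    StrictAntiFrom f r' :=
  StrictAntiOn.mono h fun _ ha => le_trans hr ha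

theorem strictAntiFrom_zero_iff : StrictAntiFrom f 0 ↔ StrictAnti f := by
  simp [StrictAntiFrom]

theorem strictAntiFrom_of_le (h : n ≤ r + 1) : StrictAntiFrom f r := by
  intro a ha b hb hab
  have := b.isLt
  simp only [Set.mem_ofPred_eq, Fin.lt_def] at ha hb hab
  omega

theorem strictAntiFrom_iff_succ_lt : StrictAntiFrom f r ↔
    ∀ j : ℕ, r ≤ j → ∀ hj : j + 1 < n, f ⟨j + 1, hj⟩ < f ⟨j, by omega⟩ := by
  refine ⟨fun h j hj hjn => h (by simp; omega) (by simp; omega) (by simp [Fin.lt_def]), ?_⟩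
  intro h a ha b hb hab
  obtain ⟨b, hbn⟩ := b
  simp only [Set.mem_ofPred_eq, Fin.lt_def] at ha hab
  clear hb
  induction b, hab using Nat.le_induction with
  | base => exact h a ha hbn
  | succ b hab ih => exact (h b (by omega) hbn).trans (ih (by omega))

end StrictAntiFrom

section LastAscent

variable {n : ℕ}

theorem lastAscentAt_iff (σ : Perm (Fin n)) (k : ℕ) :
    LastAscentAt σ k ↔ StrictAntiFrom σ k ∧ ¬ StrictAntiFrom σ (k - 1) := by
  constructor
  · rintro ⟨hk, hkn, hasc, hdec⟩
    refine ⟨strictAntiFrom_iff_succ_lt.mpr hdec, fun h => ?_⟩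
    exact (h (by simp; omega) (by simp) (by simp [Fin.lt_def]; omega)).not_gt hasc
  · rintro ⟨hdec, hnot⟩
    have hkn : k < n := by
      by_contra! hkn
      exact hnot (strictAntiFrom_of_le (by omega))
    have hk : 0 < k := Nat.pos_of_ne_zero fun h0 => hnot (by subst h0; exact hdec)
    refine ⟨hk, hkn, ?_, strictAntiFrom_iff_succ_lt.mp hdec⟩
    by_contra! hle
    have hdesc : σ ⟨k, hkn⟩ < σ ⟨k - 1, by omega⟩ :=
      hle.lt_of_ne fun he => by have := Fin.ext_iff.mp (σ.injective he); simp at this; omega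
    refine hnot (strictAntiFrom_iff_succ_lt.mpr fun j hj hjn => ?_)
    rcases hj.eq_or_lt with rfl | hj
    · simpa [Nat.sub_add_cancel hk] using hdesc
    · exact strictAntiFrom_iff_succ_lt.mp hdec j (by omega) hjn

-- The sum telescopes, since `StrictAntiFrom σ ℓ` is monotone in `ℓ`.
open Classical in
theorem sum_ite_lastAscentAt {M : Type*} [AddCommMonoid M] (σ : Perm (Fin n)) (c : M) (k : ℕ) :
    (if StrictAnti σ then c else 0) + ∑ ℓ ∈ Icc 1 k, (if LastAscentAt σ ℓ then c else 0) =
      if StrictAntiFrom σ k then c else 0 := by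
  induction k with
  | zero => simp [strictAntiFrom_zero_iff]
  | succ k ih =>
    rw [sum_Icc_succ_top (by omega), ← add_assoc, ih, lastAscentAt_iff, Nat.add_sub_cancel]
    by_cases hk : StrictAntiFrom σ k
    · simp [hk, hk.mono k.le_succ]
    · simp [hk]

theorem P_zero (m : ℕ) : P m 0 = 0 := by
  simp [P, LastAscentAt]

theorem P_self (m : ℕ) : P m m = 0 := by
  simp [P, LastAscentAt]

end LastAscent

section Pattern

variable {n : ℕ}

def Starts123 (σ : Perm (Fin n)) (i : Fin n) : Prop :=
  ∃ j k : Fin n, i < j ∧ j < k ∧ σ i < σ j ∧ σ j < σ k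

open Classical in
theorem pmpS123_eq_sum (σ : Perm (Fin n)) :
    pmpS123 σ = ∑ i, if Starts123 σ i then 1 else 0 := by
  rw [pmpS123, Nat.card_eq_fintype_card, Fintype.card_subtype, card_filter]
  exact sum_congr rfl fun _ _ => if_congr Iff.rfl rfl rfl

theorem pmpS123_eq_zero_of_strictAnti {σ : Perm (Fin n)} (h : StrictAnti σ) : pmpS123 σ = 0 := by
  rw [pmpS123_eq_sum]
  refine sum_eq_zero fun i _ => if_neg ?_
  rintro ⟨j, k, hij, -, hj, -⟩
  exact (h hij).not_gt hj

theorem strictAnti_iff_eq_revPerm (σ : Perm (Fin n)) : StrictAnti σ ↔ σ = Fin.revPerm := by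
  refine ⟨fun h => ?_, fun h => h ▸ Fin.rev_strictAnti⟩
  have hmono : StrictMono (σ.trans Fin.revPerm) := fun a b hab => Fin.rev_lt_rev.mpr (h hab)
  let e := hmono.orderIsoOfSurjective _ (σ.trans Fin.revPerm).surjective
  ext i
  have := Fin.coe_orderIso_apply e i
  simp only [e, StrictMono.coe_orderIsoOfSurjective, Equiv.coe_trans, Function.comp_apply,
    Fin.revPerm_apply, Fin.val_rev] at this
  simp only [Fin.revPerm_apply, Fin.val_rev]
  omega

open Classical in
theorem sum_ite_strictAnti_X_pow :
    ∑ σ : Perm (Fin n), (if StrictAnti σ then (X : ℕ[X]) ^ pmpS123 σ else 0) = 1 := by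
  have hrev : StrictAnti (Fin.revPerm : Perm (Fin n)) := Fin.rev_strictAnti
  simp_rw [strictAnti_iff_eq_revPerm, sum_ite_eq', mem_univ, if_true,
    pmpS123_eq_zero_of_strictAnti hrev, pow_zero]

end Pattern

section InsertMin

variable {m : ℕ}

def insertMin (i : Fin (m + 1)) (τ : Perm (Fin m)) : Perm (Fin (m + 1)) :=
  (finSuccEquiv' i).trans (τ.optionCongr.trans (finSuccEquiv' 0).symm)

variable (i : Fin (m + 1)) (τ : Perm (Fin m))

@[simp]
theorem insertMin_self : insertMin i τ i = 0 := by
  simp [insertMin]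

@[simp]
theorem insertMin_succAbove (y : Fin m) : insertMin i τ (i.succAbove y) = (τ y).succ := by
  simp [insertMin, Fin.zero_succAbove]

theorem insertMin_bijective :
    Function.Bijective fun p : Fin (m + 1) × Perm (Fin m) => insertMin p.1 p.2 := by
  refine (Fintype.bijective_iff_injective_and_card _).mpr ⟨?_, ?_⟩
  · rintro ⟨i, τ⟩ ⟨i', τ'⟩ h
    dsimp only at h
    obtain rfl : i = i' := by
      by_contra hne
      obtain ⟨y, rfl⟩ := Fin.exists_succAbove_eq hne
      have h0 : (0 : Fin (m + 1)) = (τ' y).succ := by simpa using congr($h (i'.succAbove y))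
      exact Fin.succ_ne_zero _ h0.symm
    congr
    ext y : 1
    simpa using congr($h (i.succAbove y))
  · simp [Fintype.card_perm, Nat.factorial_succ]

theorem sum_perm_succ {M : Type*} [AddCommMonoid M] (f : Perm (Fin (m + 1)) → M) :
    ∑ σ, f σ = ∑ i, ∑ τ, f (insertMin i τ) := by
  rw [← Fintype.sum_prod_type']
  exact (Fintype.sum_bijective _ (insertMin_bijective (m := m)) _ _ fun _ => rfl).symm

theorem strictAntiOn_insertMin_iff (S : Set (Fin (m + 1))) :
    StrictAntiOn (insertMin i τ) S ↔
      StrictAntiOn τ (i.succAbove ⁻¹' S) ∧ (i ∈ S → ∀ x ∈ S, x ≤ i) := by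
  constructor
  · intro h
    refine ⟨fun a ha b hb hab => ?_, fun hi x hx => ?_⟩
    · simpa using h ha hb (Fin.succAbove_lt_succAbove_iff.mpr hab)
    · by_contra! hix
      simpa using h hi hx hix
  · rintro ⟨hτ, hmax⟩ a ha b hb hab
    by_cases hb' : b = i
    · subst hb'
      obtain ⟨y, rfl⟩ := Fin.exists_succAbove_eq hab.ne
      simp [Fin.pos_iff_ne_zero]
    by_cases ha' : a = i
    · exact absurd (hmax (ha' ▸ ha) b hb) (ha' ▸ hab).not_ge
    obtain ⟨y, rfl⟩ := Fin.exists_succAbove_eq ha'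
    obtain ⟨z, rfl⟩ := Fin.exists_succAbove_eq hb'
    simpa using hτ ha hb (Fin.succAbove_lt_succAbove_iff.mp hab)

variable {i τ}

theorem strictAntiFrom_insertMin_iff_of_lt {r : ℕ} (hr : (i : ℕ) < r) :
    StrictAntiFrom (insertMin i τ) r ↔ StrictAntiFrom τ (r - 1) := by
  have hpre : i.succAbove ⁻¹' {a | r ≤ (a : ℕ)} = {y : Fin m | r - 1 ≤ (y : ℕ)} := by
    ext y
    rcases lt_or_ge y.castSucc i with hy | hy
    · rw [Set.mem_preimage, Fin.succAbove_of_castSucc_lt _ _ hy]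
      simp only [Fin.lt_def, Fin.val_castSucc] at hy
      simp only [Set.mem_ofPred_eq, Fin.val_castSucc]
      omega
    · rw [Set.mem_preimage, Fin.succAbove_of_le_castSucc _ _ hy]
      simp only [Fin.le_def, Fin.val_castSucc] at hy
      simp only [Set.mem_ofPred_eq, Fin.val_succ]
      omega
  simp only [StrictAntiFrom, strictAntiOn_insertMin_iff, hpre, Set.mem_ofPred_eq]
  simp [hr.not_ge]

theorem not_strictAntiFrom_insertMin {r : ℕ} (hr : r ≤ i) (hi : (i : ℕ) < m) :
    ¬ StrictAntiFrom (insertMin i τ) r := fun h =>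
  have hmax := ((strictAntiOn_insertMin_iff i τ _).mp h).2 hr ⟨i + 1, by omega⟩ (by simp; omega)
  by simp [Fin.le_def] at hmax

theorem strictAntiFrom_insertMin_last_iff {r : ℕ} :
    StrictAntiFrom (insertMin (Fin.last m) τ) r ↔ StrictAntiFrom τ r := by
  simp only [StrictAntiFrom, strictAntiOn_insertMin_iff, Fin.succAbove_last]
  simp [Fin.le_last]

theorem starts123_iff_not_strictAntiFrom {n : ℕ} {σ : Perm (Fin (n + 1))} {i : Fin (n + 1)}
    (hi : σ i = 0) : Starts123 σ i ↔ ¬ StrictAntiFrom σ ((i : ℕ) + 1) := by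
  constructor
  · rintro ⟨j, k, hij, hjk, -, hjk'⟩ h
    exact (h (show (i : ℕ) + 1 ≤ j from hij) (show (i : ℕ) + 1 ≤ k from hij.trans hjk)
      hjk).not_gt hjk'
  · intro h
    simp only [StrictAntiFrom, StrictAntiOn, Set.mem_ofPred_eq, not_forall, not_lt] at h
    obtain ⟨j, hj, k, hk, hjk, hle⟩ := h
    have hij : i < j := hj
    refine ⟨j, k, hij, hjk, ?_, hle.lt_of_ne (σ.injective.ne hjk.ne)⟩
    rw [hi, Fin.pos_iff_ne_zero, ← hi]
    exact σ.injective.ne hij.ne'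

theorem starts123_insertMin_self_iff :
    Starts123 (insertMin i τ) i ↔ ¬ StrictAntiFrom τ i := by
  rw [starts123_iff_not_strictAntiFrom (insertMin_self i τ),
    strictAntiFrom_insertMin_iff_of_lt (by omega), Nat.add_sub_cancel]

theorem starts123_insertMin_succAbove (y : Fin m) :
    Starts123 (insertMin i τ) (i.succAbove y) ↔ Starts123 τ y := by
  constructor
  · rintro ⟨j, k, hij, hjk, hj, hk⟩
    have hk' : k ≠ i := by rintro rfl; simp at hk
    have hj' : j ≠ i := by rintro rfl; simp at hj
    obtain ⟨b, rfl⟩ := Fin.exists_succAbove_eq hj'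
    obtain ⟨c, rfl⟩ := Fin.exists_succAbove_eq hk'
    simp only [insertMin_succAbove, Fin.succ_lt_succ_iff, Fin.succAbove_lt_succAbove_iff] at *
    exact ⟨b, c, hij, hjk, hj, hk⟩
  · rintro ⟨b, c, hyb, hbc, hb, hc⟩
    refine ⟨i.succAbove b, i.succAbove c, ?_⟩
    simpa [Fin.succAbove_lt_succAbove_iff] using ⟨hyb, hbc, hb, hc⟩

open Classical in
theorem pmpS123_insertMin :
    pmpS123 (insertMin i τ) = pmpS123 τ + if StrictAntiFrom τ i then 0 else 1 := by
  rw [pmpS123_eq_sum, pmpS123_eq_sum, Fin.sum_univ_succAbove _ i, add_comm]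
  simp only [starts123_insertMin_succAbove, starts123_insertMin_self_iff]
  split_ifs <;> rfl

end InsertMin

section Recurrence

variable {m k : ℕ} {i : Fin (m + 1)} {τ : Perm (Fin m)}

theorem lastAscentAt_insertMin_iff_of_lt (hik : (i : ℕ) + 1 < k) :
    LastAscentAt (insertMin i τ) k ↔ LastAscentAt τ (k - 1) := by
  rw [lastAscentAt_iff, lastAscentAt_iff, strictAntiFrom_insertMin_iff_of_lt (by omega),
    strictAntiFrom_insertMin_iff_of_lt (by omega)]

theorem lastAscentAt_insertMin_iff_of_eq (hik : (i : ℕ) + 1 = k) (hi : (i : ℕ) < m) :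
    LastAscentAt (insertMin i τ) k ↔ StrictAntiFrom τ i := by
  rw [lastAscentAt_iff, strictAntiFrom_insertMin_iff_of_lt (by omega),
    iff_true_intro (not_strictAntiFrom_insertMin (by omega) hi), and_true]
  subst hik
  rfl

theorem not_lastAscentAt_insertMin (hki : k ≤ i) (hi : (i : ℕ) < m) :
    ¬ LastAscentAt (insertMin i τ) k := fun h =>
  not_strictAntiFrom_insertMin hki hi ((lastAscentAt_iff _ _).mp h).1

theorem lastAscentAt_insertMin_last_iff :
    LastAscentAt (insertMin (Fin.last m) τ) k ↔ LastAscentAt τ k := by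
  rw [lastAscentAt_iff, lastAscentAt_iff, strictAntiFrom_insertMin_last_iff,
    strictAntiFrom_insertMin_last_iff]

open Classical in
theorem sum_insertMin_of_lt (hik : (i : ℕ) + 1 < k) :
    ∑ τ, (if LastAscentAt (insertMin i τ) k then (X : ℕ[X]) ^ pmpS123 (insertMin i τ) else 0) =
      X * P m (k - 1) := by
  rw [P, mul_sum]
  refine sum_congr rfl fun τ _ => ?_
  rw [lastAscentAt_insertMin_iff_of_lt hik]
  split_ifs with h
  · have hτ : ¬ StrictAntiFrom τ i := fun hi => ((lastAscentAt_iff _ _).mp h).2 (hi.mono (by omega))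
    rw [pmpS123_insertMin, if_neg hτ, pow_succ, mul_comm]
  · rw [mul_zero]

open Classical in
theorem sum_insertMin_of_eq (hik : (i : ℕ) + 1 = k) (hi : (i : ℕ) < m) :
    ∑ τ, (if LastAscentAt (insertMin i τ) k then (X : ℕ[X]) ^ pmpS123 (insertMin i τ) else 0) =
      1 + ∑ ℓ ∈ Icc 1 (k - 1), P m ℓ := by
  have hterm : ∀ τ, (if LastAscentAt (insertMin i τ) k then
      (X : ℕ[X]) ^ pmpS123 (insertMin i τ) else 0) = if StrictAntiFrom τ i then X ^ pmpS123 τ else 0 := by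
    intro τ
    rw [lastAscentAt_insertMin_iff_of_eq hik hi]
    split_ifs with h
    · rw [pmpS123_insertMin, if_pos h, add_zero]
    · rfl
  simp_rw [hterm, ← sum_ite_lastAscentAt, sum_add_distrib, sum_ite_strictAnti_X_pow, P]
  rw [sum_comm, show k - 1 = i by omega]

open Classical in
theorem sum_insertMin_of_le (hki : k ≤ i) (hi : (i : ℕ) < m) :
    ∑ τ, (if LastAscentAt (insertMin i τ) k then (X : ℕ[X]) ^ pmpS123 (insertMin i τ) else 0) =
      0 :=
  sum_eq_zero fun _ _ => if_neg (not_lastAscentAt_insertMin hki hi)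

open Classical in
theorem sum_insertMin_last :
    ∑ τ, (if LastAscentAt (insertMin (Fin.last m) τ) k then
      (X : ℕ[X]) ^ pmpS123 (insertMin (Fin.last m) τ) else 0) = P m k := by
  refine sum_congr rfl fun τ _ => ?_
  rw [lastAscentAt_insertMin_last_iff, pmpS123_insertMin,
    if_pos (strictAntiFrom_of_le (by simp)), add_zero]

theorem sum_range_ite_lt_ite_eq {M : Type*} [AddCommMonoid M] (a b : M) {p q : ℕ} (hpq : p < q) :
    ∑ j ∈ range q, (if j < p then a else if j = p then b else 0) = p • a + b := by
  induction q, hpq using Nat.le_induction with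
  | base =>
    rw [sum_range_succ, if_neg (lt_irrefl p), if_pos rfl,
      sum_congr rfl fun j hj => if_pos (mem_range.mp hj), sum_const, card_range]
  | succ q hpq ih =>
    rw [sum_range_succ, ih, if_neg (by omega), if_neg (by omega), add_zero]

theorem P_succ (hk : 1 ≤ k) (hkm : k ≤ m) :
    P (m + 1) k = (k - 1) • (X * P m (k - 1)) + 1 + ∑ ℓ ∈ Icc 1 k, P m ℓ := by
  classical
  rw [P, sum_perm_succ, Fin.sum_univ_castSucc, sum_insertMin_last]
  have hinner : ∀ j : Fin m,
      ∑ τ, (if LastAscentAt (insertMin j.castSucc τ) k then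
        (X : ℕ[X]) ^ pmpS123 (insertMin j.castSucc τ) else 0) =
      if (j : ℕ) < k - 1 then X * P m (k - 1)
        else if (j : ℕ) = k - 1 then 1 + ∑ ℓ ∈ Icc 1 (k - 1), P m ℓ else 0 := by
    intro j
    split_ifs with hlt heq
    · exact sum_insertMin_of_lt (by simp; omega)
    · exact sum_insertMin_of_eq (by simp; omega) (by simp)
    · exact sum_insertMin_of_le (by simp; omega) (by simp)
  rw [sum_congr rfl fun j _ => hinner j,
    Fin.sum_univ_eq_sum_range (fun j => if j < k - 1 then X * P m (k - 1)
      else if j = k - 1 then 1 + ∑ ℓ ∈ Icc 1 (k - 1), P m ℓ else 0),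
    sum_range_ite_lt_ite_eq _ _ (by omega), ← Nat.sub_add_cancel hk,
    sum_Icc_succ_top (by omega), Nat.add_sub_cancel]
  abel

end Recurrence

theorem stmt9 (n k : ℕ) (h1 : 1 ≤ k) (h2 : k ≤ n - 1) :
    (∀ m, P m 0 = 0) ∧ (∀ m, P m m = 0) ∧
    P n k = (k - 1) • (Polynomial.X * P (n - 1) (k - 1)) + 1 +
      ∑ ℓ ∈ Finset.Icc 1 k, P (n - 1) ℓ := by
  refine ⟨P_zero, P_self, ?_⟩
  obtain ⟨m, rfl⟩ : ∃ m, n = m + 1 := ⟨n - 1, by omega⟩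
  exact P_succ h1 (by omega)
end

section
/- Let Q_{n,k}(x) = Σ x^{pmp_{1\underline{2}3}(σ)} where the sum is over σ ∈ S_n with σ_k = 1. Then Q_{n,k}(x) = Σ_{ℓ=1}^{k-1} Q_{n-1,ℓ}(x) + (x(n-k-1) + 1)·Q_{n-1,k}(x), with Q_{n,N}(x) = 0 for N > n. -/
/-- The value 1 of `σ` is at (1-indexed) position `k`. -/
def OneAt {n : ℕ} (σ : Equiv.Perm (Fin n)) (k : ℕ) : Prop :=
  ∃ (h1 : 0 < k) (h2 : k - 1 < n), σ ⟨k - 1, h2⟩ = ⟨0, by omega⟩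

open Classical in
/-- `Q n k = Σ x^{pmp_{1\underline{2}3}(σ)}` over `σ ∈ S_n` with 1 at position `k`. -/
noncomputable def Q (n k : ℕ) : Polynomial ℕ :=
  ∑ σ : Equiv.Perm (Fin n), if OneAt σ k then Polynomial.X ^ pmpM123 σ else 0

/-!
Write `c` for the position of the value 1 and `p` for that of the value 2. Deleting whichever of
these two entries comes later does not change which of the other positions are middles of a 123:
the deleted entry is never the larger right end of an occurrence, and whenever it is the smaller
left end, the other small entry, which lies further left and is smaller than every remaining
value, serves instead. If `p < c` the deleted 1 is no middle, and what remains is a permutation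
of `n - 1` with 1 at position `p`; this gives `Q (n-1) ℓ` for each `ℓ < k`. If `p > c` what
remains has 1 at position `k`, and the deleted 2 is a middle exactly when `p ≠ n`, which gives
the factor `x (n - k - 1) + 1`.
-/

open Equiv Finset Polynomial

namespace Pmp123

variable {m : ℕ}

def insertAt (a b : Fin (m + 1)) (τ : Perm (Fin m)) : Perm (Fin (m + 1)) :=
  (finSuccEquiv' a).trans (τ.optionCongr.trans (finSuccEquiv' b).symm)

@[simp]
theorem insertAt_apply_self (a b : Fin (m + 1)) (τ : Perm (Fin m)) : insertAt a b τ a = b := by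
  simp [insertAt]

@[simp]
theorem insertAt_apply_succAbove (a b : Fin (m + 1)) (τ : Perm (Fin m)) (j : Fin m) :
    insertAt a b τ (a.succAbove j) = b.succAbove (τ j) := by
  simp [insertAt]

theorem insertAt_injective (a b : Fin (m + 1)) : Function.Injective (insertAt a b) := by
  intro τ τ' h
  ext j : 1
  apply Fin.succAbove_right_injective (p := b)
  rw [← insertAt_apply_succAbove, h, insertAt_apply_succAbove]

theorem exists_insertAt_eq {a b : Fin (m + 1)} {σ : Perm (Fin (m + 1))} (h : σ a = b) :
    ∃ τ, insertAt a b τ = σ := by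
  set e := ((finSuccEquiv' a).symm.trans σ).trans (finSuccEquiv' b)
  have he : ∀ j, e (some j) ≠ none := fun j => by
    simp [e, ← h, σ.injective.eq_iff]
  refine ⟨removeNone e, Equiv.ext fun x => ?_⟩
  rcases eq_or_ne x a with rfl | hx
  · rw [insertAt_apply_self, h]
  obtain ⟨j, rfl⟩ := Fin.exists_succAbove_eq hx
  rw [insertAt_apply_succAbove, ← finSuccEquiv'_symm_some,
    removeNone_some _ (Option.ne_none_iff_exists'.mp (he j))]
  simp [e]

theorem sum_ite_apply_eq {M : Type*} [AddCommMonoid M] (a b : Fin (m + 1))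
    (F : Perm (Fin (m + 1)) → M) :
    ∑ σ, (if σ a = b then F σ else 0) = ∑ τ, F (insertAt a b τ) := by
  rw [← sum_filter]
  refine (sum_nbij (insertAt a b) (fun τ _ => by simp) (insertAt_injective a b).injOn
    (fun σ hσ => ?_) fun _ _ => rfl).symm
  obtain ⟨τ, rfl⟩ := exists_insertAt_eq (mem_filter.mp hσ).2
  exact ⟨τ, mem_univ _, rfl⟩

def IsMid123 {n : ℕ} (σ : Perm (Fin n)) (j : Fin n) : Prop :=
  ∃ i k, i < j ∧ j < k ∧ σ i < σ j ∧ σ j < σ k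

open Classical in
theorem pmpM123_eq_sum {n : ℕ} (σ : Perm (Fin n)) :
    pmpM123 σ = ∑ j, if IsMid123 σ j then 1 else 0 := by
  rw [pmpM123, Nat.card_eq_fintype_card, Fintype.card_subtype, card_filter]
  exact sum_congr rfl fun _ _ => if_congr Iff.rfl rfl rfl

open Classical in
theorem pmpM123_eq_add_of_succAbove {σ : Perm (Fin (m + 1))} {τ : Perm (Fin m)}
    {a : Fin (m + 1)} (h : ∀ j, IsMid123 σ (a.succAbove j) ↔ IsMid123 τ j) :
    pmpM123 σ = pmpM123 τ + if IsMid123 σ a then 1 else 0 := by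
  simp only [pmpM123_eq_sum, Fin.sum_univ_succAbove _ a, h, add_comm]

theorem not_isMid123_of_val_eq_zero {n : ℕ} {σ : Perm (Fin n)} {x : Fin n}
    (h : (σ x : ℕ) = 0) : ¬ IsMid123 σ x := by
  rintro ⟨i, k, -, -, hi, -⟩
  rw [Fin.lt_def] at hi
  omega

theorem isMid123_iff_ne_last {σ : Perm (Fin (m + 1))} {c a : Fin (m + 1)} (hca : c < a)
    (hc : (σ c : ℕ) = 0) (ha : (σ a : ℕ) = 1) : IsMid123 σ a ↔ a ≠ Fin.last m := by
  refine ⟨fun ⟨i, k, _, hak, _, _⟩ => (hak.trans_le (Fin.le_last k)).ne, fun hlast => ?_⟩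
  have hal := Fin.lt_last_iff_ne_last.mpr hlast
  have h1 : σ (Fin.last m) ≠ σ c := σ.injective.ne (hca.trans hal).ne'
  have h2 : σ (Fin.last m) ≠ σ a := σ.injective.ne hal.ne'
  refine ⟨c, Fin.last m, hca, hal, ?_, ?_⟩ <;>
    simp only [Fin.lt_def, ne_eq, Fin.ext_iff] at * <;> omega

theorem IsMid123.insertAt {a b : Fin (m + 1)} {τ : Perm (Fin m)} {j : Fin m}
    (h : IsMid123 τ j) : IsMid123 (insertAt a b τ) (a.succAbove j) := by
  obtain ⟨i, k, hij, hjk, hi, hk⟩ := h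
  exact ⟨a.succAbove i, a.succAbove k, by simpa using hij, by simpa using hjk, by simpa using hi,
    by simpa using hk⟩

theorem isMid123_insertAt_succAbove_iff {a a' b : Fin (m + 1)} {τ : Perm (Fin m)}
    (ha' : a' < a) (hb : (b : ℕ) ≤ 1) (hba' : (insertAt a b τ a' : ℕ) ≤ 1) (j : Fin m) :
    IsMid123 (insertAt a b τ) (a.succAbove j) ↔ IsMid123 τ j := by
  refine ⟨fun ⟨i, k, hix, hxk, hi, hk⟩ => ?_, IsMid123.insertAt⟩
  set σ := insertAt a b τ
  set x := a.succAbove j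
  have hσa : σ a = b := insertAt_apply_self a b τ
  have hka : k ≠ a := by
    rintro rfl
    rw [Fin.lt_def] at hi hk
    omega
  obtain ⟨i₀, hi₀a, hi₀x, hi₀⟩ : ∃ i₀, i₀ ≠ a ∧ i₀ < x ∧ σ i₀ < σ x := by
    by_cases hia : i = a
    · subst hia
      have h1 : σ a' ≠ σ i := σ.injective.ne ha'.ne
      have h2 : σ a' ≠ σ x := σ.injective.ne (ha'.trans hix).ne
      refine ⟨a', ha'.ne, ha'.trans hix, ?_⟩
      simp only [Fin.lt_def, ne_eq, Fin.ext_iff] at *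
      omega
    · exact ⟨i, hia, hix, hi⟩
  obtain ⟨i', rfl⟩ := Fin.exists_succAbove_eq hi₀a
  obtain ⟨k', rfl⟩ := Fin.exists_succAbove_eq hka
  simp only [σ, x, insertAt_apply_succAbove, Fin.succAbove_lt_succAbove_iff] at hi₀x hxk hi₀ hk
  exact ⟨i', k', hi₀x, hxk, hi₀, hk⟩

theorem pmpM123_insertAt_zero {c : Fin (m + 2)} {p : Fin (m + 1)} {τ : Perm (Fin (m + 1))}
    (hpc : p.castSucc < c) (hp : τ p = 0) : pmpM123 (insertAt c 0 τ) = pmpM123 τ := by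
  have hσp : insertAt c 0 τ p.castSucc = 1 := by
    rw [← Fin.succAbove_of_castSucc_lt c p hpc, insertAt_apply_succAbove, hp]; rfl
  rw [pmpM123_eq_add_of_succAbove (isMid123_insertAt_succAbove_iff hpc (by simp) (by simp [hσp])),
    if_neg (not_isMid123_of_val_eq_zero (by simp)), add_zero]

theorem pmpM123_insertAt_one {c : Fin (m + 1)} {p : Fin (m + 2)} {τ : Perm (Fin (m + 1))}
    (hcp : c.castSucc < p) (hc : τ c = 0) :
    pmpM123 (insertAt p 1 τ) = pmpM123 τ + if p = Fin.last (m + 1) then 0 else 1 := by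
  have hσc : insertAt p 1 τ c.castSucc = 0 := by
    rw [← Fin.succAbove_of_castSucc_lt p c hcp, insertAt_apply_succAbove, hc]; rfl
  have hmid := isMid123_iff_ne_last (σ := insertAt p 1 τ) hcp (by simp [hσc]) (by simp)
  rw [pmpM123_eq_add_of_succAbove (isMid123_insertAt_succAbove_iff hcp (by simp) (by simp [hσc]))]
  simp only [hmid, ite_not]

theorem Q_eq_zero_of_lt {n N : ℕ} (h : n < N) : Q n N = 0 :=
  sum_eq_zero fun σ _ => if_neg fun ⟨_, hN, _⟩ => by omega

theorem Q_succ_eq_sum {N : ℕ} (c : Fin (N + 1)) :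
    Q (N + 1) (c + 1) = ∑ σ : Perm (Fin (N + 1)), if σ c = 0 then X ^ pmpM123 σ else 0 := by
  classical
  unfold Q
  exact sum_congr rfl fun σ _ =>
    if_congr ⟨fun ⟨_, _, h⟩ => h, fun h => ⟨c.succ_pos, c.isLt, h⟩⟩ rfl rfl

/-- The terms of `Q (m + 2) (c + 1)` with the value 2 at position `p`; here positions and values
are `0`-indexed, so the values 1 and 2 are `0` and `1 : Fin (m + 2)`. -/
noncomputable def QAt (c p : Fin (m + 2)) : ℕ[X] :=
  ∑ σ : Perm (Fin (m + 2)), if σ c = 0 ∧ σ p = 1 then X ^ pmpM123 σ else 0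

theorem Q_eq_sum_QAt (c : Fin (m + 2)) : Q (m + 2) (c + 1) = ∑ p, QAt c p := by
  rw [Q_succ_eq_sum]
  simp only [QAt]
  rw [sum_comm]
  refine sum_congr rfl fun σ _ => ?_
  simp [ite_and, ← Equiv.eq_symm_apply]

theorem QAt_self (c : Fin (m + 2)) : QAt c c = 0 :=
  sum_eq_zero fun σ _ => if_neg fun ⟨h0, h1⟩ => by simp [h0] at h1

theorem QAt_castSucc_of_lt {c : Fin (m + 2)} {p : Fin (m + 1)} (hpc : p.castSucc < c) :
    QAt c p.castSucc = Q (m + 1) (p + 1) := by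
  rw [QAt, Q_succ_eq_sum]
  simp only [ite_and]
  rw [sum_ite_apply_eq c 0 fun σ => if σ p.castSucc = 1 then X ^ pmpM123 σ else 0]
  refine sum_congr rfl fun τ _ => ?_
  rw [← Fin.succAbove_of_castSucc_lt c p hpc, insertAt_apply_succAbove, Fin.zero_succAbove]
  by_cases hp : τ p = 0
  · simp [hp, pmpM123_insertAt_zero hpc hp]
  · have h1 : (τ p).succ ≠ 1 := fun h =>
      hp (Fin.succ_injective _ (h.trans Fin.succ_zero_eq_one.symm))
    simp [hp, h1]

theorem QAt_of_castSucc_lt {c : Fin (m + 1)} {p : Fin (m + 2)} (hcp : c.castSucc < p) :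
    QAt c.castSucc p = (if p = Fin.last (m + 1) then 1 else X) * Q (m + 1) (c + 1) := by
  rw [QAt, Q_succ_eq_sum, mul_sum]
  simp only [and_comm, ite_and]
  rw [sum_ite_apply_eq p 1 fun σ => if σ c.castSucc = 0 then X ^ pmpM123 σ else 0]
  refine sum_congr rfl fun τ _ => ?_
  rw [← Fin.succAbove_of_castSucc_lt p c hcp, insertAt_apply_succAbove]
  simp only [Fin.succAbove_eq_zero_iff one_ne_zero]
  by_cases hc : τ c = 0
  · rw [if_pos hc, if_pos hc, pmpM123_insertAt_one hcp hc]
    split_ifs <;> simp [pow_succ']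
  · simp [hc]

theorem QAt_last (c : Fin (m + 2)) : QAt c (Fin.last (m + 1)) = Q (m + 1) (c + 1) := by
  by_cases hc : c = Fin.last (m + 1)
  · rw [hc, QAt_self, Q_eq_zero_of_lt (by simp)]
  obtain ⟨c, rfl⟩ := Fin.exists_castSucc_eq.mpr hc
  rw [QAt_of_castSucc_lt (Fin.castSucc_lt_last c), if_pos rfl, one_mul, Fin.val_castSucc]

theorem QAt_castSucc (c : Fin (m + 2)) (p : Fin (m + 1)) :
    QAt c p.castSucc =
      if (p : ℕ) < c then Q (m + 1) (p + 1)
      else if (c : ℕ) < p then X * Q (m + 1) (c + 1) else 0 := by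
  split_ifs with hpc hcp
  · exact QAt_castSucc_of_lt hpc
  · obtain ⟨c, rfl⟩ := (Fin.exists_castSucc_eq (i := c)).mpr (by rintro rfl; simp at hcp; omega)
    rw [QAt_of_castSucc_lt hcp, if_neg (Fin.castSucc_ne_last p), Fin.val_castSucc]
  · rw [show p.castSucc = c from Fin.ext (by simp; omega), QAt_self]

theorem sum_range_ite_lt_ite_gt {M : Type*} [AddCommMonoid M] {k n : ℕ} (hkn : k ≤ n)
    (f : ℕ → M) (y : M) :
    ∑ i ∈ range n, (if i < k then f i else if k < i then y else 0) =
      ∑ i ∈ range k, f i + (n - k - 1) • y := by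
  induction n, hkn using Nat.le_induction with
  | base =>
    rw [Nat.sub_self, zero_tsub, zero_smul, add_zero]
    exact sum_congr rfl fun i hi => if_pos (mem_range.mp hi)
  | succ n hkn ih =>
    rw [sum_range_succ, ih, if_neg hkn.not_gt]
    rcases hkn.eq_or_lt with rfl | hlt
    · simp
    · rw [if_pos hlt, add_assoc, ← succ_nsmul, show n + 1 - k - 1 = n - k - 1 + 1 by omega]

theorem sum_range_add_one_eq_sum_Icc {M : Type*} [AddCommMonoid M] (f : ℕ → M) (n : ℕ) :
    ∑ i ∈ range n, f (i + 1) = ∑ i ∈ Icc 1 n, f i := by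
  rw [← Finset.Ico_add_one_right_eq_Icc, sum_Ico_eq_sum_range, Nat.add_sub_cancel]
  simp only [add_comm]

end Pmp123

open Pmp123 in
theorem stmt11 (n k : ℕ) (hn : 2 ≤ n) (h1 : 1 ≤ k) (h2 : k ≤ n) :
    (∀ m N : ℕ, m < N → Q m N = 0) ∧
    Q n k = (∑ ℓ ∈ Finset.Icc 1 (k - 1), Q (n - 1) ℓ) +
      ((n - k - 1) • Polynomial.X + 1) * Q (n - 1) k := by
  refine ⟨fun _ _ => Q_eq_zero_of_lt, ?_⟩
  obtain ⟨m, rfl⟩ : ∃ m, n = m + 2 := ⟨n - 2, by omega⟩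
  obtain ⟨c, rfl⟩ : ∃ c : Fin (m + 2), k = c + 1 := ⟨⟨k - 1, by omega⟩, by simp; omega⟩
  rw [Q_eq_sum_QAt, Fin.sum_univ_castSucc, QAt_last]
  simp only [QAt_castSucc]
  rw [Fin.sum_univ_eq_sum_range (fun i => if i < c then Q (m + 1) (i + 1)
      else if (c : ℕ) < i then X * Q (m + 1) (c + 1) else 0),
    sum_range_ite_lt_ite_gt (by omega), sum_range_add_one_eq_sum_Icc (Q (m + 1))]
  simp only [Nat.add_sub_cancel, add_mul, one_mul, smul_mul_assoc, add_assoc]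
  congr 3
  omega
end

section
/- Let λ = (λ_1 ≥ λ_2 ≥ ... ≥ λ_k) be a Ferrers board with k - i + 1 ≤ λ_i ≤ k for all i, and let S_λ be the set of fillings of λ placing exactly one × in each row and each column. For a filling π, let pmp_{1\underline{2}}(π) be the number of columns c whose × has some × strictly below and strictly to its left within cells of λ. Then Σ_{π ∈ S_λ} x^{pmp_{1\underline{2}}(π)} = Π_{i=1}^{k} (1 + (λ_i - (k - i + 1))x). -/
/-!
Encode a filling `π` by its code `c i = #{r < i | π r < π i}`, the number of × below-left of the
× in row `i`. The code is a bijection from permutations onto the sequences with `c i ≤ i`: the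
× of row `i` is recovered from `c i` and the rows above it. A column is counted by
`1\underline{2}` exactly when the code of the row of its × is nonzero, and on a Ferrers board
with decreasing rows the filling fits the board exactly when `c i < λ_i - (k - 1 - i)` for every
row. So the generating polynomial factors over the rows, row `i` contributing
`1 + (λ_i - (k - i)) x`.
-/

/-- For a filling (encoded by `π`: the × of row `r` is in column `π r`),
the number of columns `c` whose × has another × strictly below and to the left,
i.e. the pmp of the pattern `1\underline{2}` on the filling. -/
noncomputable def pmpOneTwo {k : ℕ} (π : Equiv.Perm (Fin k)) : ℕ :=
  Nat.card {c : Fin k // ∃ r : Fin k, r < π.symm c ∧ π r < c}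

open Finset

lemma Finset.strictMonoOn_card_Iio_sdiff {α : Type*} [Preorder α] [LocallyFiniteOrderBot α]
    [DecidableEq α] (t : Finset α) : StrictMonoOn (fun v => #(Iio v \ t)) (↑t)ᶜ := by
  intro v hv w _ hvw
  refine card_lt_card ((ssubset_iff_of_subset ?_).2 ⟨v, ?_, ?_⟩)
  · exact sdiff_subset_sdiff (Iio_subset_Iio hvw.le) le_rfl
  · simpa [hvw] using hv
  · simp

lemma Finset.sum_range_ite_eq_zero {R : Type*} [AddCommMonoidWithOne R] (x : R) {m : ℕ}
    (hm : 1 ≤ m) : ∑ v ∈ range m, (if v = 0 then 1 else x) = 1 + (m - 1) • x := by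
  obtain ⟨n, rfl⟩ := Nat.exists_eq_add_of_le' hm
  simp [sum_range_succ', add_comm]

namespace Equiv.Perm

variable {k : ℕ}

def lehmerCode (π : Perm (Fin k)) (i : Fin k) : ℕ :=
  #{r ∈ Iio i | π r < π i}

lemma lehmerCode_le (π : Perm (Fin k)) (i : Fin k) : π.lehmerCode i ≤ i :=
  (card_filter_le _ _).trans (Fin.card_Iio i).le

lemma val_le_lehmerCode_add (π : Perm (Fin k)) (i : Fin k) :
    (π i : ℕ) ≤ π.lehmerCode i + (k - 1 - i) := by
  calc (π i : ℕ) = #(Iio (π i)) := (Fin.card_Iio _).symm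
    _ ≤ #({r ∈ Iio i | π r < π i} ∪ Ioi i) := by
      refine card_le_card_of_injOn π.symm (fun v hv => ?_) π.symm.injective.injOn
      have hv : v < π i := by simpa using hv
      rcases lt_trichotomy (π.symm v) i with h | h | h
      · simp [h, hv]
      · simp [← h] at hv
      · simp [h]
    _ ≤ π.lehmerCode i + (k - 1 - i) := (card_union_le _ _).trans_eq (by rw [Fin.card_Ioi]; rfl)

lemma lehmerCode_add_le {π : Perm (Fin k)} {i : Fin k} {m : ℕ}
    (h : ∀ r, i ≤ r → (π r : ℕ) < m) : π.lehmerCode i + (k - i) ≤ m := by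
  calc π.lehmerCode i + (k - i) = #(Ici i ∪ {r ∈ Iio i | π r < π i}) := by
        rw [card_union_of_disjoint (disjoint_left.2 fun r hr hr' => by
          simp_all [not_lt.2 (mem_Ici.1 hr)]), Fin.card_Ici, add_comm]
        rfl
    _ ≤ #(range m) := by
      refine card_le_card_of_injOn (fun r => (π r : ℕ)) (fun r hr => ?_)
        (fun a _ b _ hab => π.injective (Fin.val_injective hab))
      simp only [coe_union, coe_Ici, coe_filter, mem_Iio, Set.mem_union, Set.mem_Ici,
        Set.mem_ofPred_eq] at hr
      rcases hr with hr | ⟨-, hr⟩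
      · simpa using h r hr
      · simpa using (Fin.lt_def.1 hr).trans (h i le_rfl)
    _ = m := card_range m

lemma lehmerCode_eq_card_Iio_sdiff (π : Perm (Fin k)) (i : Fin k) :
    π.lehmerCode i = #(Iio (π i) \ (Ioi i).image π) := by
  refine card_nbij' π π.symm (fun r hr => ?_) (fun v hv => ?_) (fun r _ => by simp)
    (fun v _ => by simp)
  · simp only [coe_filter, mem_Iio, Set.mem_ofPred_eq] at hr
    simp [hr.2, hr.1.le.not_gt]
  · simp only [coe_sdiff, coe_Iio, coe_image, coe_Ioi, Set.mem_sdiff, Set.mem_Iio,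
      Set.mem_image, Set.mem_Ioi, not_exists, not_and] at hv
    have hne : π.symm v ≠ i := by rintro rfl; simp at hv
    have hlt : ¬ i < π.symm v := fun h => hv.2 _ h (by simp)
    simp [hv.1, lt_of_le_of_ne (not_lt.1 hlt) hne]

lemma lehmerCode_injective : Function.Injective (lehmerCode (k := k)) := by
  intro π σ h
  ext i
  induction i using WellFoundedGT.induction with
  | _ i ih =>
    have himage : (Ioi i).image π = (Ioi i).image σ :=
      image_congr fun r hr => Fin.ext (ih r (mem_Ioi.1 hr))
    have hcode := congrFun h i
    rw [lehmerCode_eq_card_Iio_sdiff, lehmerCode_eq_card_Iio_sdiff, himage] at hcode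
    have hπ : π i ∉ (Ioi i).image σ := himage ▸ by simp
    exact congrArg Fin.val <| (strictMonoOn_card_Iio_sdiff _).injOn hπ (by simp) hcode

lemma exists_lehmerCode_eq {t : Fin k → ℕ} (ht : ∀ i, t i ≤ i) :
    ∃ π : Perm (Fin k), π.lehmerCode = t := by
  classical
  have hsub : univ.image lehmerCode ⊆ Fintype.piFinset fun i : Fin k => range (i + 1) := by
    simpa [subset_iff, Nat.lt_succ_iff] using fun π => π.lehmerCode_le
  have hcard : #(Fintype.piFinset fun i : Fin k => range (i + 1)) ≤
      #(univ.image (lehmerCode (k := k))) := by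
    rw [card_image_of_injective _ lehmerCode_injective, card_univ, Fintype.card_perm,
      Fintype.card_fin, Fintype.card_piFinset]
    simp only [card_range]
    rw [Fin.prod_univ_eq_prod_range (· + 1), prod_range_add_one_eq_factorial]
  have ht' : t ∈ univ.image lehmerCode := by
    rw [eq_of_subset_of_card_le hsub hcard]
    simpa [Nat.lt_succ_iff] using ht
  simpa using ht'

lemma pmpOneTwo_eq_card_lehmerCode_ne_zero (π : Perm (Fin k)) :
    pmpOneTwo π = #{i | π.lehmerCode i ≠ 0} := by
  classical
  have hcode (i : Fin k) : π.lehmerCode i ≠ 0 ↔ ∃ r, r < i ∧ π r < π i := by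
    rw [← Nat.pos_iff_ne_zero, lehmerCode, card_pos, filter_nonempty_iff]
    simp
  rw [pmpOneTwo, Nat.card_congr (π.symm.subtypeEquiv (q := (π.lehmerCode · ≠ 0))
    fun c => by simp [hcode]), Nat.card_eq_fintype_card, Fintype.card_subtype]

lemma forall_lt_iff_lehmerCode {lam : Fin k → ℕ} (hlam : Antitone lam) (π : Perm (Fin k)) :
    (∀ i, (π i : ℕ) < lam i) ↔ ∀ i, π.lehmerCode i < lam i - (k - 1 - i) := by
  refine ⟨fun h i => ?_, fun h i => ?_⟩
  · have := lehmerCode_add_le (i := i) fun r hr => (h r).trans_le (hlam hr)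
    omega
  · have := π.val_le_lehmerCode_add i
    have := h i
    omega

end Equiv.Perm

open Equiv.Perm in
open Classical in
theorem stmt13 (k : ℕ) (lam : Fin k → ℕ) (hmono : Antitone lam)
    (hlb : ∀ i : Fin k, k - (i : ℕ) ≤ lam i) (hub : ∀ i : Fin k, lam i ≤ k) :
    ∑ π ∈ Finset.univ.filter (fun π : Equiv.Perm (Fin k) => ∀ i, (π i : ℕ) < lam i),
        (Polynomial.X : Polynomial ℕ) ^ pmpOneTwo π =
      ∏ i : Fin k, (1 + (lam i - (k - (i : ℕ))) • (Polynomial.X : Polynomial ℕ)) := by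
  have hfactor (i : Fin k) : ∑ v ∈ range (lam i - (k - 1 - i)),
      (if v = 0 then 1 else (Polynomial.X : Polynomial ℕ)) =
        1 + (lam i - (k - (i : ℕ))) • Polynomial.X := by
    rw [sum_range_ite_eq_zero _ (by have := hlb i; omega)]
    congr 2
    omega
  rw [Finset.prod_congr rfl fun i _ => (hfactor i).symm, prod_univ_sum]
  refine sum_nbij lehmerCode (fun π hπ => ?_) lehmerCode_injective.injOn (fun t ht => ?_)
    (fun π _ => ?_)
  · simpa [forall_lt_iff_lehmerCode hmono] using hπ
  · simp only [mem_coe, Fintype.mem_piFinset, mem_range] at ht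
    obtain ⟨π, rfl⟩ := exists_lehmerCode_eq (t := t) fun i => by
      have := ht i; have := hub i; omega
    exact ⟨π, by simpa [forall_lt_iff_lehmerCode hmono] using ht, rfl⟩
  · rw [prod_ite, prod_const_one, one_mul, prod_const, pmpOneTwo_eq_card_lehmerCode_ne_zero]
end
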